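/- arXiv:0905.0380 — 12 statements merged into one kernel-verified Lean document; each statement's English description precedes it below -/
import Mathlib

section
/- Let G be a finite group and let H and H' be subgroups of G. Then the following are equivalent: (1) for all conjugation-stable subsets S and T of G one has ⟨H ∩ S⟩ = ⟨H ∩ T⟩ if and only if ⟨H' ∩ S⟩ = ⟨H' ∩ T⟩; (2) for every length map m on G, the jump sets of the filtrations induced by the restrictions of m to H and to H' coincide, i.e. Jump(Fil_m^• H) = Jump(Fil_m^• H'). -/
/-- A subset `S` of a group is conjugation-stable if `gSg⁻¹ = S` for all `g`. -/
def ConjStable {G : Type*} [Group G] (S : Set G) : Prop :=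
  ∀ g : G, (fun x => g * x * g⁻¹) '' S = S

/-- `m : G → ℝ` is a length map: positive away from `1`, conjugation invariant,
and `m (g ^ k) ≤ |k| * m g`.  (Nonnegativity records that `m` takes values in `ℝ≥0`.) -/
structure IsLengthMap {G : Type*} [Group G] (m : G → ℝ) : Prop where
  nonneg : ∀ g : G, 0 ≤ m g
  pos : ∀ g : G, g ≠ 1 → 0 < m g
  conj_invariant : ∀ g h : G, m (h * g * h⁻¹) = m g
  pow_le : ∀ (k : ℤ) (g : G), m (g ^ k) ≤ |(k : ℝ)| * m g

/-- `Fil m δ` is the subgroup generated by the elements of length `< δ`. -/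
def Fil {G : Type*} [Group G] (m : G → ℝ) (δ : ℝ) : Subgroup G :=
  Subgroup.closure {g : G | m g < δ}

/-- The jump set of the filtration induced by a length map `m`. -/
def JumpSet {G : Type*} [Group G] (m : G → ℝ) : Set ℝ :=
  {δ : ℝ | 0 < δ ∧ ∀ ε : ℝ, δ < ε → Fil m δ ≠ Fil m ε}

/-- Subgroups `H, H'` of `G` are jump equivalent if for all conjugation-stable
subsets `S, T` of `G`, `⟨H ∩ S⟩ = ⟨H ∩ T⟩ ↔ ⟨H' ∩ S⟩ = ⟨H' ∩ T⟩`. -/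
def JumpEquivalent {G : Type*} [Group G] (H H' : Subgroup G) : Prop :=
  ∀ S T : Set G, ConjStable S → ConjStable T →
    (Subgroup.closure ((H : Set G) ∩ S) = Subgroup.closure ((H : Set G) ∩ T) ↔
     Subgroup.closure ((H' : Set G) ∩ S) = Subgroup.closure ((H' : Set G) ∩ T))


/-!
For a length map `m`, the sublevel sets `{g | m g < δ}` are conjugation-stable, and the
filtration of a subgroup `K` at `δ` is `⟨K ∩ {g | m g < δ}⟩`; so jump equivalence makes the
filtrations of `H` and `H'` change at the same places.

Conversely, given conjugation-stable `S` and `T`, replace them by the symmetric sets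
`U = S ∪ S⁻¹` and `V = T ∪ T⁻¹`, which generate the same subgroups inside any `K`. The length map
taking the value `0` at `1`, `1` on `U`, `3/2` on `V \ U` and `2` elsewhere (any values in `[1, 2]` satisfy
`m (g ^ k) ≤ |k| m g`) has `3/2` as a jump for `K` exactly when `⟨K ∩ V⟩ ⊄ ⟨K ∩ U⟩`.
Comparing jump sets for this map and for the one with `U` and `V` swapped gives both inclusions.
-/

section ConjStable

variable {G : Type*} [Group G]

theorem conjStable_iff {S : Set G} : ConjStable S ↔ ∀ g h : G, h * g * h⁻¹ ∈ S ↔ g ∈ S := by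
  constructor
  · intro hS g h
    constructor
    · intro hconj
      rw [← hS h⁻¹]
      exact ⟨h * g * h⁻¹, hconj, by group⟩
    · intro hg
      rw [← hS h]
      exact ⟨g, hg, rfl⟩
  · intro hS g
    ext x
    constructor
    · rintro ⟨y, hy, rfl⟩
      exact (hS y g).2 hy
    · intro hx
      refine ⟨g⁻¹ * x * g, (hS _ g).1 ?_, by group⟩
      simpa only [show g * (g⁻¹ * x * g) * g⁻¹ = x by group] using hx

theorem ConjStable.union_inv {S : Set G} (hS : ConjStable S) : ConjStable (S ∪ S⁻¹) := by
  rw [conjStable_iff] at hS ⊢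
  intro g h
  simp only [Set.mem_union, Set.mem_inv, show (h * g * h⁻¹)⁻¹ = h * g⁻¹ * h⁻¹ by group, hS]

theorem union_inv_inv (S : Set G) : (S ∪ S⁻¹)⁻¹ = S ∪ S⁻¹ := by
  rw [Set.union_inv, inv_inv, Set.union_comm]

theorem IsLengthMap.conjStable_setOf_lt {m : G → ℝ} (hm : IsLengthMap m) (δ : ℝ) :
    ConjStable {g | m g < δ} :=
  conjStable_iff.2 fun g h => by simp only [Set.mem_ofPred_eq, hm.conj_invariant]

end ConjStable

section Closure

variable {G : Type*} [Group G]

theorem closure_inter_union_inv (K : Subgroup G) (S : Set G) :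
    Subgroup.closure ((K : Set G) ∩ (S ∪ S⁻¹)) = Subgroup.closure ((K : Set G) ∩ S) := by
  refine le_antisymm ((Subgroup.closure_le _).2 ?_)
    (Subgroup.closure_mono (Set.inter_subset_inter_right _ Set.subset_union_left))
  rintro x ⟨hxK, hxS | hxS⟩
  · exact Subgroup.subset_closure ⟨hxK, hxS⟩
  · have hx_inv : x⁻¹ ∈ (K : Set G) ∩ S := ⟨K.inv_mem hxK, hxS⟩
    simpa only [inv_inv, SetLike.mem_coe] using (Subgroup.closure _).inv_mem (Subgroup.subset_closure hx_inv)

theorem closure_inter_insert_one (K : Subgroup G) (X : Set G) :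
    Subgroup.closure ((K : Set G) ∩ insert 1 X) = Subgroup.closure ((K : Set G) ∩ X) := by
  rw [Set.inter_insert_of_mem K.one_mem, ← Set.singleton_union, Subgroup.closure_union,
    Subgroup.closure_singleton_one, bot_sup_eq]

end Closure

section Filtration

variable {G : Type*} [Group G]

theorem map_subtype_fil (K : Subgroup G) (m : G → ℝ) (δ : ℝ) :
    (Fil (fun k : K => m k) δ).map K.subtype =
      Subgroup.closure ((K : Set G) ∩ {g | m g < δ}) := by
  rw [Fil, MonoidHom.map_closure]
  congr 1
  ext g
  simp only [Set.mem_image, Set.mem_ofPred_eq, Set.mem_inter_iff, SetLike.mem_coe,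
    Subgroup.coe_subtype]
  constructor
  · rintro ⟨k, hk, rfl⟩
    exact ⟨k.2, hk⟩
  · rintro ⟨hg, hδ⟩
    exact ⟨⟨g, hg⟩, hδ, rfl⟩

theorem fil_subtype_eq_iff (K : Subgroup G) (m : G → ℝ) (δ ε : ℝ) :
    Fil (fun k : K => m k) δ = Fil (fun k : K => m k) ε ↔
      Subgroup.closure ((K : Set G) ∩ {g | m g < δ}) =
        Subgroup.closure ((K : Set G) ∩ {g | m g < ε}) := by
  rw [← map_subtype_fil, ← map_subtype_fil, (Subgroup.map_injective K.subtype_injective).eq_iff]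

theorem jumpSet_eq_of_fil_eq_iff {G' : Type*} [Group G'] {m : G → ℝ} {m' : G' → ℝ}
    (h : ∀ δ ε, Fil m δ = Fil m ε ↔ Fil m' δ = Fil m' ε) : JumpSet m = JumpSet m' := by
  ext δ
  simp only [JumpSet, Set.mem_ofPred_eq, Ne, h]

end Filtration

section TwoSetLength

variable {G : Type*} [Group G]

theorem isLengthMap_of_one_le_of_le_two {m : G → ℝ} (h_one : m 1 = 0)
    (h_conj : ∀ g h : G, m (h * g * h⁻¹) = m g) (h_inv : ∀ g : G, m g⁻¹ = m g)
    (h_bounds : ∀ g : G, g ≠ 1 → 1 ≤ m g ∧ m g ≤ 2) : IsLengthMap m := by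
  have nonneg (g : G) : 0 ≤ m g := by
    rcases eq_or_ne g 1 with rfl | hg
    · exact h_one.ge
    · exact zero_le_one.trans (h_bounds g hg).1
  refine ⟨nonneg, fun g hg => zero_lt_one.trans_le (h_bounds g hg).1, h_conj, fun k g => ?_⟩
  rcases eq_or_ne (g ^ k) 1 with hgk | hgk
  · rw [hgk, h_one]
    exact mul_nonneg (abs_nonneg _) (nonneg g)
  have hg : g ≠ 1 := by rintro rfl; simp at hgk
  rcases le_or_gt |k| 1 with hk | hk
  · obtain rfl | rfl | rfl : k = 0 ∨ k = 1 ∨ k = -1 := by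
      have := abs_le.1 hk
      omega
    · simp at hgk
    · simp
    · simp [h_inv]
  · have hk' : (2 : ℝ) ≤ |(k : ℝ)| := by rw [← Int.cast_abs]; exact_mod_cast hk
    calc m (g ^ k) ≤ 2 := (h_bounds _ hgk).2
      _ ≤ |(k : ℝ)| * 1 := by linarith
      _ ≤ |(k : ℝ)| * m g := by gcongr; exact (h_bounds g hg).1

open Classical in
noncomputable def twoSetLength (U V : Set G) (g : G) : ℝ :=
  if g = 1 then 0 else if g ∈ U then 1 else if g ∈ V then 3 / 2 else 2

theorem isLengthMap_twoSetLength {U V : Set G} (hU : ConjStable U) (hV : ConjStable V)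
    (hU_inv : U⁻¹ = U) (hV_inv : V⁻¹ = V) : IsLengthMap (twoSetLength U V) := by
  classical
  rw [conjStable_iff] at hU hV
  refine isLengthMap_of_one_le_of_le_two (by simp [twoSetLength]) (fun g h => ?_) (fun g => ?_)
    (fun g hg => ?_)
  · simp only [twoSetLength, hU, hV, conj_eq_one_iff]
  · have hU' : g⁻¹ ∈ U ↔ g ∈ U := by rw [← Set.mem_inv, hU_inv]
    have hV' : g⁻¹ ∈ V ↔ g ∈ V := by rw [← Set.mem_inv, hV_inv]
    simp only [twoSetLength, inv_eq_one, hU', hV']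
  · simp only [twoSetLength, if_neg hg]
    split_ifs <;> norm_num

theorem setOf_twoSetLength_lt_three_halves (U V : Set G) :
    {g | twoSetLength U V g < 3 / 2} = insert 1 U := by
  ext g
  simp only [twoSetLength, Set.mem_ofPred_eq, Set.mem_insert_iff]
  split_ifs <;> norm_num <;> tauto

theorem setOf_twoSetLength_lt_of_lt_of_le (U V : Set G) {ε : ℝ} (h₁ : 3 / 2 < ε) (h₂ : ε ≤ 2) :
    {g | twoSetLength U V g < ε} = insert 1 (U ∪ V) := by
  ext g
  simp only [twoSetLength, Set.mem_ofPred_eq, Set.mem_insert_iff, Set.mem_union]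
  split_ifs <;> constructor <;> intro <;> first | tauto | linarith

theorem setOf_twoSetLength_lt_of_two_lt (U V : Set G) {ε : ℝ} (h : 2 < ε) :
    {g | twoSetLength U V g < ε} = Set.univ := by
  ext g
  simp only [twoSetLength, Set.mem_ofPred_eq, Set.mem_univ, iff_true]
  split_ifs <;> linarith

theorem three_halves_mem_jumpSet_twoSetLength_iff (K : Subgroup G) (U V : Set G) :
    (3 / 2 : ℝ) ∈ JumpSet (fun k : K => twoSetLength U V k) ↔
      ¬ Subgroup.closure ((K : Set G) ∩ V) ≤ Subgroup.closure ((K : Set G) ∩ U) := by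
  have fil_three_halves : Subgroup.closure ((K : Set G) ∩ {g | twoSetLength U V g < 3 / 2}) =
      Subgroup.closure ((K : Set G) ∩ U) := by
    rw [setOf_twoSetLength_lt_three_halves, closure_inter_insert_one]
  have fil_mid : ∀ ε : ℝ, 3 / 2 < ε → ε ≤ 2 →
      Subgroup.closure ((K : Set G) ∩ {g | twoSetLength U V g < ε}) =
        Subgroup.closure ((K : Set G) ∩ U) ⊔ Subgroup.closure ((K : Set G) ∩ V) := by
    intro ε h₁ h₂
    rw [setOf_twoSetLength_lt_of_lt_of_le U V h₁ h₂, closure_inter_insert_one,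
      Set.inter_union_distrib_left, Subgroup.closure_union]
  simp only [JumpSet, Set.mem_ofPred_eq, Ne, fil_subtype_eq_iff, fil_three_halves]
  constructor
  · rintro ⟨-, hjump⟩ hle
    exact hjump 2 (by norm_num) (by rw [fil_mid 2 (by norm_num) le_rfl, sup_eq_left.2 hle])
  · intro hnle
    refine ⟨by norm_num, fun ε hε heq => hnle ?_⟩
    rcases le_or_gt ε 2 with h₂ | h₂
    · rw [fil_mid ε hε h₂] at heq
      exact sup_eq_left.1 heq.symm
    · rw [setOf_twoSetLength_lt_of_two_lt U V h₂, Set.inter_univ, Subgroup.closure_eq] at heq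
      rw [heq]
      exact (Subgroup.closure_le K).2 Set.inter_subset_left

theorem closure_inter_le_iff_of_forall_jumpSet_eq {H H' : Subgroup G}
    (hJ : ∀ m : G → ℝ, IsLengthMap m →
      JumpSet (fun h : H => m h) = JumpSet (fun h : H' => m h))
    {U V : Set G} (hU : ConjStable U) (hV : ConjStable V) (hU_inv : U⁻¹ = U)
    (hV_inv : V⁻¹ = V) :
    Subgroup.closure ((H : Set G) ∩ V) ≤ Subgroup.closure ((H : Set G) ∩ U) ↔
      Subgroup.closure ((H' : Set G) ∩ V) ≤ Subgroup.closure ((H' : Set G) ∩ U) := by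
  have hjump := congrArg ((3 / 2 : ℝ) ∈ ·)
    (hJ _ (isLengthMap_twoSetLength hU hV hU_inv hV_inv))
  simpa only [three_halves_mem_jumpSet_twoSetLength_iff, eq_iff_iff, not_iff_not] using hjump

end TwoSetLength

theorem jumpEquivalent_iff_forall_lengthMap_jumpSet_eq_general
    {G : Type*} [Group G] (H H' : Subgroup G) :
    JumpEquivalent H H' ↔
      ∀ m : G → ℝ, IsLengthMap m →
        JumpSet (fun h : H => m h) = JumpSet (fun h : H' => m h) := by
  constructor
  · intro hJE m hm
    refine jumpSet_eq_of_fil_eq_iff fun δ ε => ?_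
    rw [fil_subtype_eq_iff, fil_subtype_eq_iff]
    exact hJE _ _ (hm.conjStable_setOf_lt δ) (hm.conjStable_setOf_lt ε)
  · intro hJ S T hS hT
    have hle := closure_inter_le_iff_of_forall_jumpSet_eq hJ hS.union_inv hT.union_inv
      (union_inv_inv S) (union_inv_inv T)
    have hge := closure_inter_le_iff_of_forall_jumpSet_eq hJ hT.union_inv hS.union_inv
      (union_inv_inv T) (union_inv_inv S)
    simp only [closure_inter_union_inv] at hle hge
    rw [le_antisymm_iff, le_antisymm_iff, hle, hge]

/-- for a finite group `G` and subgroups `H`, `H'`, jump equivalence of `H` and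
`H'` is equivalent to: for every length map `m` on `G`, the jump sets of the filtrations of
`H` and `H'` induced by the restrictions of `m` coincide. -/
theorem jumpEquivalent_iff_forall_lengthMap_jumpSet_eq
    {G : Type*} [Group G] [Finite G] (H H' : Subgroup G) :
    JumpEquivalent H H' ↔
      ∀ m : G → ℝ, IsLengthMap m →
        JumpSet (fun h : H => m h) = JumpSet (fun h : H' => m h) :=
  jumpEquivalent_iff_forall_lengthMap_jumpSet_eq_general H H'
end

section
/- Let G be a finite group and let H and H' be subgroups of G. If H and H' are order equivalent in G, then H and H' are jump equivalent in G. -/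
/-- Subgroups `H, H'` of `G` are order equivalent if `#⟨H ∩ S⟩ = #⟨H' ∩ S⟩` for every
conjugation-stable subset `S` of `G`. -/
def OrderEquivalent {G : Type*} [Group G] (H H' : Subgroup G) : Prop :=
  ∀ S : Set G, ConjStable S →
    Nat.card (Subgroup.closure ((H : Set G) ∩ S)) =
      Nat.card (Subgroup.closure ((H' : Set G) ∩ S))

/-- Subgroups `H, H'` of `G` are Gassmann-Sunada equivalent if `#(H ∩ S) = #(H' ∩ S)` for
every conjugation-stable subset `S` of `G`. -/
def GassmannEquivalent {G : Type*} [Group G] (H H' : Subgroup G) : Prop :=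
  ∀ S : Set G, ConjStable S →
    Set.ncard ((H : Set G) ∩ S) = Set.ncard ((H' : Set G) ∩ S)

/-- Subgroups `H, H'` of `G` are Kronecker equivalent if for every conjugation-stable subset
`S` of `G`, `H ∩ S = ∅ ↔ H' ∩ S = ∅`. -/
def KroneckerEquivalent {G : Type*} [Group G] (H H' : Subgroup G) : Prop :=
  ∀ S : Set G, ConjStable S → ((H : Set G) ∩ S = ∅ ↔ (H' : Set G) ∩ S = ∅)

/-!
Two subgroups `A, B` of a finite group are equal iff both have the order of `A ⊔ B`, and
`⟨H ∩ S⟩ ⊔ ⟨H ∩ T⟩ = ⟨H ∩ (S ∪ T)⟩`. So whether `⟨H ∩ S⟩ = ⟨H ∩ T⟩` is decided by the orders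
of the subgroups generated by `H ∩ S`, `H ∩ T` and `H ∩ (S ∪ T)`, and `S ∪ T` is again
conjugation-stable.
-/

theorem ConjStable.union {G : Type*} [Group G] {S T : Set G} (hS : ConjStable S)
    (hT : ConjStable T) : ConjStable (S ∪ T) := by
  intro g
  rw [Set.image_union, hS g, hT g]

theorem Subgroup.eq_iff_card_eq_card_sup {G : Type*} [Group G] (A B : Subgroup G)
    [Finite ↥(A ⊔ B)] :
    A = B ↔ Nat.card A = Nat.card ↥(A ⊔ B) ∧ Nat.card B = Nat.card ↥(A ⊔ B) := by
  constructor
  · rintro rfl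
    simp
  · rintro ⟨hA, hB⟩
    exact (Subgroup.eq_of_le_of_card_ge le_sup_left hA.ge).trans
      (Subgroup.eq_of_le_of_card_ge le_sup_right hB.ge).symm

theorem Subgroup.closure_inter_union {G : Type*} [Group G] (K S T : Set G) :
    Subgroup.closure (K ∩ (S ∪ T)) = Subgroup.closure (K ∩ S) ⊔ Subgroup.closure (K ∩ T) := by
  rw [Set.inter_union_distrib_left, Subgroup.closure_union]

/-- in a finite group, order equivalent subgroups are jump equivalent. -/
theorem jumpEquivalent_of_orderEquivalent {G : Type*} [Group G] [Finite G]
    (H H' : Subgroup G) (h : OrderEquivalent H H') : JumpEquivalent H H' := by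
  intro S T hS hT
  rw [Subgroup.eq_iff_card_eq_card_sup, Subgroup.eq_iff_card_eq_card_sup,
    ← Subgroup.closure_inter_union, ← Subgroup.closure_inter_union,
    h S hS, h T hT, h (S ∪ T) (hS.union hT)]
end

section
/- Let G be a finite group and let H and H' be subgroups of G. If H and H' are jump equivalent in G, then H and H' are Kronecker equivalent in G. -/
/-! Taking `T = ∅` in the definition of jump equivalence shows that `⟨H ∩ S⟩` is trivial
exactly when `⟨H' ∩ S⟩` is. When `1 ∉ S`, the group `⟨H ∩ S⟩` is trivial only if `H ∩ S`
is empty; when `1 ∈ S`, both `H ∩ S` and `H' ∩ S` contain `1`. -/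

section

variable {G : Type*} [Group G]

theorem conjStable_empty : ConjStable (∅ : Set G) := fun _ => Set.image_empty _

theorem Subgroup.inter_eq_empty_iff_closure_inter_eq_bot (H : Subgroup G) {S : Set G}
    (hS : (1 : G) ∉ S) : (H : Set G) ∩ S = ∅ ↔ Subgroup.closure ((H : Set G) ∩ S) = ⊥ := by
  rw [Subgroup.closure_eq_bot_iff]
  refine ⟨fun h => h ▸ Set.empty_subset _, fun h => Set.eq_empty_of_forall_notMem ?_⟩
  rintro x hx
  exact hS (Set.mem_singleton_iff.mp (h hx) ▸ hx.2)

theorem JumpEquivalent.closure_inter_eq_bot_iff {H H' : Subgroup G} (h : JumpEquivalent H H')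
    {S : Set G} (hS : ConjStable S) :
    Subgroup.closure ((H : Set G) ∩ S) = ⊥ ↔ Subgroup.closure ((H' : Set G) ∩ S) = ⊥ := by
  simpa using h S ∅ hS conjStable_empty

end

theorem kroneckerEquivalent_of_jumpEquivalent_general {G : Type*} [Group G]
    (H H' : Subgroup G) (h : JumpEquivalent H H') : KroneckerEquivalent H H' := by
  intro S hS
  by_cases h1 : (1 : G) ∈ S
  · exact iff_of_false (Set.nonempty_iff_ne_empty.mp ⟨1, H.one_mem, h1⟩)
      (Set.nonempty_iff_ne_empty.mp ⟨1, H'.one_mem, h1⟩)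
  · rw [H.inter_eq_empty_iff_closure_inter_eq_bot h1,
      H'.inter_eq_empty_iff_closure_inter_eq_bot h1]
    exact h.closure_inter_eq_bot_iff hS

/-- in a finite group, jump equivalent subgroups are Kronecker equivalent. -/
theorem kroneckerEquivalent_of_jumpEquivalent {G : Type*} [Group G] [Finite G]
    (H H' : Subgroup G) (h : JumpEquivalent H H') : KroneckerEquivalent H H' :=
  kroneckerEquivalent_of_jumpEquivalent_general H H' h
end

section
/- Let e₁, …, e₅ be pairwise orthogonal vectors in a real inner product space with 1 ≤ ‖e₁‖ < ‖e₂‖ < ‖e₃‖ < ‖e₄‖ < ‖e₅‖ < √5/2. Let L = ℤe₁ + ⋯ + ℤe₅ be the additive group they span, and let m : L → ℝ≥0 be the length map m(l) = ‖l‖. Then Jump(Fil_m^• L) = {‖e₁‖, ‖e₂‖, ‖e₃‖, ‖e₄‖, ‖e₅‖}. Moreover, setting v = (e₁ + e₂ + e₃ + e₄ + e₅)/2 and L' = L + ℤv, every element of L' not lying in L has norm at least √5/2, and Jump(Fil_m^• L') = {‖e₁‖, ‖e₂‖, ‖e₃‖, ‖e₄‖, ‖e₅‖, ‖v‖}. 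-/
open scoped RealInnerProductSpace

/-- `AddFil m δ` is the additive subgroup generated by the elements of length `< δ`. -/
def AddFil {A : Type*} [AddGroup A] (m : A → ℝ) (δ : ℝ) : AddSubgroup A :=
  AddSubgroup.closure {a : A | m a < δ}

/-- The jump set of the filtration induced by a length map `m` on an additive group. -/
def AddJumpSet {A : Type*} [AddGroup A] (m : A → ℝ) : Set ℝ :=
  {δ : ℝ | 0 < δ ∧ ∀ ε : ℝ, δ < ε → AddFil m δ ≠ AddFil m ε}

/-!
For a finite generating set `W` of a group whose short elements are always generated by short
generators, and in which no generator lies in the subgroup generated by strictly shorter ones, the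
filtration changes exactly at the lengths of the generators.

In the orthogonal lattice `L`, Pythagoras shows that `∑ cᵢ eᵢ` is at least as long as every `eᵢ`
with `cᵢ ≠ 0`, and `eⱼ` is orthogonal to all shorter `eᵢ`; so `W = {eᵢ}` qualifies. In
`L' = L + ℤv` every element outside `L` is `∑ (cᵢ + ½) eᵢ`, hence no shorter than `v` because
`|cᵢ + ½| ≥ ½`; and `‖v‖² = ∑ ‖eᵢ‖² / 4 ≥ 5/4` exceeds every `‖eᵢ‖²`. So `v` only becomes short
after all the `eᵢ` have, and `W = {eᵢ} ∪ {v}` qualifies.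
-/

open Filter Topology

lemma Set.Finite.exists_gt_forall_lt_iff_lt {s : Set ℝ} (hs : s.Finite) {δ : ℝ} (hδ : δ ∉ s) :
    ∃ ε, δ < ε ∧ ∀ a ∈ s, a < δ ↔ a < ε := by
  have hcut : ∀ᶠ ε in 𝓝[>] δ, ∀ a ∈ s, a < δ ↔ a < ε := by
    refine hs.eventually_all.2 fun a ha => ?_
    rcases lt_or_gt_of_ne (ne_of_mem_of_not_mem ha hδ) with haδ | hδa
    · filter_upwards [self_mem_nhdsWithin] with ε hε
      exact iff_of_true haδ (haδ.trans hε)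
    · filter_upwards [Ioo_mem_nhdsGT hδa] with ε hε
      exact iff_of_false hδa.not_gt hε.2.not_gt
  exact (hcut.and self_mem_nhdsWithin).exists.imp fun ε h => ⟨h.2, h.1⟩

section JumpSet

variable {A : Type*} [AddGroup A] (m : A → ℝ)

lemma map_addFil_subtype (H : AddSubgroup A) (δ : ℝ) :
    (AddFil (fun x : H => m x) δ).map H.subtype = AddSubgroup.closure {x | x ∈ H ∧ m x < δ} := by
  rw [AddFil, AddMonoidHom.map_closure]
  congr 1
  ext x
  exact ⟨fun ⟨y, hy, hyx⟩ => hyx ▸ ⟨y.2, hy⟩, fun ⟨hx, hmx⟩ => ⟨⟨x, hx⟩, hmx, rfl⟩⟩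

theorem addJumpSet_closure_eq_image {W : Set A} (hW : W.Finite) (hpos : ∀ w ∈ W, 0 < m w)
    (hshort : ∀ δ, ∀ x ∈ AddSubgroup.closure W, m x < δ →
      x ∈ AddSubgroup.closure {w ∈ W | m w < δ})
    (hmin : ∀ w ∈ W, w ∉ AddSubgroup.closure {w' ∈ W | m w' < m w}) :
    AddJumpSet (fun x : AddSubgroup.closure W => m x) = m '' W := by
  set H := AddSubgroup.closure W
  have hfil : ∀ δ, (AddFil (fun x : H => m x) δ).map H.subtype =
      AddSubgroup.closure {w ∈ W | m w < δ} := fun δ => by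
    rw [map_addFil_subtype]
    refine le_antisymm ((AddSubgroup.closure_le _).2 fun x hx => hshort δ x hx.1 hx.2) ?_
    exact AddSubgroup.closure_mono fun w hw => ⟨AddSubgroup.subset_closure hw.1, hw.2⟩
  have hfil_eq : ∀ δ ε, AddFil (fun x : H => m x) δ = AddFil (fun x : H => m x) ε ↔
      AddSubgroup.closure {w ∈ W | m w < δ} = AddSubgroup.closure {w ∈ W | m w < ε} :=
    fun δ ε => by rw [← hfil, ← hfil, (AddSubgroup.map_injective H.subtype_injective).eq_iff]
  ext δ
  refine ⟨fun ⟨_, hjump⟩ => ?_, ?_⟩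
  · by_contra hδ
    obtain ⟨ε, hδε, hcut⟩ := (hW.image m).exists_gt_forall_lt_iff_lt hδ
    refine hjump ε hδε ((hfil_eq δ ε).2 ?_)
    congr 1
    ext w
    exact and_congr_right fun hw => hcut (m w) (Set.mem_image_of_mem m hw)
  · rintro ⟨w, hw, rfl⟩
    refine ⟨hpos w hw, fun ε hε h => hmin w hw ?_⟩
    rw [(hfil_eq _ ε).1 h]
    exact AddSubgroup.subset_closure ⟨hw, hε⟩

end JumpSet

section Orthogonal

variable {E : Type*} [NormedAddCommGroup E] [InnerProductSpace ℝ E] {ι : Type*} {e : ι → E}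

lemma Pairwise.inner_smul_eq_zero (he : Pairwise fun i j => ⟪e i, e j⟫ = 0) (r : ι → ℝ) :
    Pairwise fun i j => ⟪r i • e i, r j • e j⟫ = 0 := fun i j hij => by
  dsimp only
  rw [real_inner_smul_left, real_inner_smul_right, he hij, mul_zero, mul_zero]

lemma notMem_closure_of_inner_eq_zero {w : E} {S : Set E} (hw : w ≠ 0)
    (hS : ∀ y ∈ S, ⟪w, y⟫ = 0) : w ∉ AddSubgroup.closure S := fun h => by
  have hperp : AddSubgroup.closure S ≤ (ℝ ∙ w)ᗮ.toAddSubgroup := (AddSubgroup.closure_le _).2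
    fun y hy => Submodule.mem_orthogonal_singleton_iff_inner_right.2 (hS y hy)
  exact hw (inner_self_eq_zero.1 (Submodule.mem_orthogonal_singleton_iff_inner_right.1 (hperp h)))

lemma notMem_closure_sep_norm_lt_norm (he : Pairwise fun i j => ⟪e i, e j⟫ = 0) {j : ι}
    (hj : e j ≠ 0) : e j ∉ AddSubgroup.closure {w ∈ Set.range e | ‖w‖ < ‖e j‖} := by
  refine notMem_closure_of_inner_eq_zero hj ?_
  rintro _ ⟨⟨i, rfl⟩, hi⟩
  exact he fun hji => hi.ne (by rw [hji])

lemma half_le_abs_intCast_add_half (c : ℤ) : (2 : ℝ)⁻¹ ≤ |(c : ℝ) + 2⁻¹| := by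
  rcases le_or_gt 0 c with hc | hc
  · have : (0 : ℝ) ≤ c := Int.cast_nonneg hc
    exact le_abs.2 (Or.inl (by linarith))
  · have : (c : ℝ) ≤ -1 := by exact_mod_cast Int.le_sub_one_of_lt hc
    exact le_abs.2 (Or.inr (by linarith))

variable [Fintype ι]

lemma norm_sum_sq_of_pairwise_inner_eq_zero (he : Pairwise fun i j => ⟪e i, e j⟫ = 0) :
    ‖∑ i, e i‖ ^ 2 = ∑ i, ‖e i‖ ^ 2 := by
  classical
  rw [← real_inner_self_eq_norm_sq, sum_inner]
  refine Finset.sum_congr rfl fun i _ => ?_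
  rw [inner_sum, Finset.sum_eq_single i (fun j _ hji => he hji.symm) (by simp),
    real_inner_self_eq_norm_sq]

lemma norm_le_norm_sum_of_pairwise_inner_eq_zero (he : Pairwise fun i j => ⟪e i, e j⟫ = 0)
    (i : ι) : ‖e i‖ ≤ ‖∑ j, e j‖ := by
  refine (pow_le_pow_iff_left₀ (norm_nonneg _) (norm_nonneg _) two_ne_zero).1 ?_
  rw [norm_sum_sq_of_pairwise_inner_eq_zero he]
  exact Finset.single_le_sum (f := fun j => ‖e j‖ ^ 2) (fun j _ => by positivity)
    (Finset.mem_univ i)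

lemma mem_closure_range_iff {x : E} :
    x ∈ AddSubgroup.closure (Set.range e) ↔ ∃ c : ι → ℤ, ∑ i, (c i : ℝ) • e i = x := by
  simp only [← Submodule.span_int_eq_addSubgroupClosure, Submodule.mem_toAddSubgroup,
    Submodule.mem_span_range_iff_exists_fun, Int.cast_smul_eq_zsmul]

lemma mem_closure_sep_norm_lt (he : Pairwise fun i j => ⟪e i, e j⟫ = 0) {x : E} {δ : ℝ}
    (hx : x ∈ AddSubgroup.closure (Set.range e)) (hxδ : ‖x‖ < δ) :
    x ∈ AddSubgroup.closure {w ∈ Set.range e | ‖w‖ < δ} := by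
  obtain ⟨c, rfl⟩ := mem_closure_range_iff.1 hx
  refine sum_mem fun i _ => ?_
  rcases eq_or_ne (c i) 0 with hci | hci
  · simp [hci, zero_mem]
  have hlong : ‖e i‖ ≤ ‖(c i : ℝ) • e i‖ := by
    rw [norm_smul]
    refine le_mul_of_one_le_left (norm_nonneg _) ?_
    rw [Real.norm_eq_abs, ← Int.cast_abs]
    exact_mod_cast Int.one_le_abs hci
  have hshort : ‖e i‖ < δ :=
    (hlong.trans (norm_le_norm_sum_of_pairwise_inner_eq_zero
      (he.inner_smul_eq_zero fun j => (c j : ℝ)) i)).trans_lt hxδ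
  have hmem : e i ∈ {w ∈ Set.range e | ‖w‖ < δ} := ⟨Set.mem_range_self i, hshort⟩
  rw [Int.cast_smul_eq_zsmul]
  exact zsmul_mem (AddSubgroup.subset_closure hmem) _

theorem addJumpSet_closure_range (he : Pairwise fun i j => ⟪e i, e j⟫ = 0)
    (hne : ∀ i, e i ≠ 0) :
    AddJumpSet (fun x : AddSubgroup.closure (Set.range e) => ‖(x : E)‖) =
      Set.range fun i => ‖e i‖ := by
  rw [addJumpSet_closure_eq_image norm (Set.finite_range e), ← Set.range_comp]
  · rfl
  · rintro _ ⟨i, rfl⟩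
    exact norm_pos_iff.2 (hne i)
  · exact fun δ x hx hxδ => mem_closure_sep_norm_lt he hx hxδ
  · rintro _ ⟨j, rfl⟩
    exact notMem_closure_sep_norm_lt_norm he (hne j)

lemma smul_half_sum_add_sum_smul (a : ℝ) (r : ι → ℝ) :
    a • ((2 : ℝ)⁻¹ • ∑ i, e i) + ∑ i, r i • e i = ∑ i, (r i + a * 2⁻¹) • e i := by
  rw [smul_smul, Finset.smul_sum, ← Finset.sum_add_distrib]
  exact Finset.sum_congr rfl fun i _ => by module

lemma mem_closure_insert_half_sum {x : E}
    (hx : x ∈ AddSubgroup.closure (insert ((2 : ℝ)⁻¹ • ∑ i, e i) (Set.range e))) :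
    x ∈ AddSubgroup.closure (Set.range e) ∨ ∃ c : ι → ℤ, ∑ i, ((c i : ℝ) + 2⁻¹) • e i = x := by
  rw [← Submodule.span_int_eq_addSubgroupClosure, Submodule.mem_toAddSubgroup,
    Submodule.mem_span_insert] at hx
  obtain ⟨a, z, hz, rfl⟩ := hx
  obtain ⟨c, rfl⟩ := (Submodule.mem_span_range_iff_exists_fun ℤ).1 hz
  simp only [← Int.cast_smul_eq_zsmul ℝ, smul_half_sum_add_sum_smul]
  obtain ⟨n, rfl | rfl⟩ := Int.even_or_odd' a
  · refine Or.inl (mem_closure_range_iff.2 ⟨fun i => c i + n, ?_⟩)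
    exact Finset.sum_congr rfl fun i _ => by push_cast; ring_nf
  · refine Or.inr ⟨fun i => c i + n, ?_⟩
    exact Finset.sum_congr rfl fun i _ => by push_cast; ring_nf

lemma norm_half_sum_le_norm_sum_add_half (he : Pairwise fun i j => ⟪e i, e j⟫ = 0) (c : ι → ℤ) :
    ‖(2 : ℝ)⁻¹ • ∑ i, e i‖ ≤ ‖∑ i, ((c i : ℝ) + 2⁻¹) • e i‖ := by
  rw [Finset.smul_sum]
  refine (pow_le_pow_iff_left₀ (norm_nonneg _) (norm_nonneg _) two_ne_zero).1 ?_
  rw [norm_sum_sq_of_pairwise_inner_eq_zero (he.inner_smul_eq_zero fun _ => 2⁻¹),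
    norm_sum_sq_of_pairwise_inner_eq_zero (he.inner_smul_eq_zero fun i => (c i : ℝ) + 2⁻¹)]
  refine Finset.sum_le_sum fun i _ => ?_
  rw [norm_smul, norm_smul, Real.norm_eq_abs, Real.norm_eq_abs, abs_of_pos (by norm_num)]
  gcongr
  exact half_le_abs_intCast_add_half (c i)

lemma norm_half_sum_le_norm (he : Pairwise fun i j => ⟪e i, e j⟫ = 0) {x : E}
    (hx : x ∈ AddSubgroup.closure (insert ((2 : ℝ)⁻¹ • ∑ i, e i) (Set.range e)))
    (hxL : x ∉ AddSubgroup.closure (Set.range e)) : ‖(2 : ℝ)⁻¹ • ∑ i, e i‖ ≤ ‖x‖ := by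
  obtain hxL' | ⟨c, rfl⟩ := mem_closure_insert_half_sum hx
  · exact absurd hxL' hxL
  · exact norm_half_sum_le_norm_sum_add_half he c

lemma half_sum_notMem_closure_range (he : Pairwise fun i j => ⟪e i, e j⟫ = 0)
    (hv : (2 : ℝ)⁻¹ • ∑ i, e i ≠ 0) : (2 : ℝ)⁻¹ • ∑ i, e i ∉ AddSubgroup.closure (Set.range e) := by
  intro h
  obtain ⟨c, hc⟩ := mem_closure_range_iff.1 h
  -- `0 = v - ∑ cᵢ eᵢ` lies in `v + L`, whose elements are all at least as long as `v`.
  have hzero : ∑ i, ((-c i : ℤ) + (2 : ℝ)⁻¹) • e i = 0 := by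
    have := smul_half_sum_add_sum_smul (e := e) 1 fun i => -(c i : ℝ)
    simp only [Finset.sum_neg_distrib, neg_smul, one_smul, ← hc, add_neg_cancel, one_mul] at this
    push_cast
    exact this.symm
  have := norm_half_sum_le_norm_sum_add_half he (fun i => -c i)
  rw [hzero, norm_zero] at this
  exact hv (norm_le_zero_iff.1 this)

theorem addJumpSet_closure_insert_half_sum [Nonempty ι]
    (he : Pairwise fun i j => ⟪e i, e j⟫ = 0) (hne : ∀ i, e i ≠ 0)
    (hev : ∀ i, ‖e i‖ < ‖(2 : ℝ)⁻¹ • ∑ i, e i‖) :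
    AddJumpSet (fun x : AddSubgroup.closure (insert ((2 : ℝ)⁻¹ • ∑ i, e i) (Set.range e)) =>
      ‖(x : E)‖) = insert ‖(2 : ℝ)⁻¹ • ∑ i, e i‖ (Set.range fun i => ‖e i‖) := by
  set v := (2 : ℝ)⁻¹ • ∑ i, e i
  have hv : 0 < ‖v‖ := (norm_nonneg _).trans_lt (hev (Classical.arbitrary ι))
  rw [addJumpSet_closure_eq_image norm ((Set.finite_range e).insert v), Set.image_insert_eq,
    ← Set.range_comp]
  · rfl
  · rintro _ (rfl | ⟨i, rfl⟩)
    exacts [hv, norm_pos_iff.2 (hne i)]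
  · intro δ x hx hxδ
    rcases lt_or_ge ‖v‖ δ with hvδ | hδv
    · have hall : {w ∈ insert v (Set.range e) | ‖w‖ < δ} = insert v (Set.range e) := by
        refine Set.sep_eq_self_iff_mem_true.2 ?_
        rintro _ (rfl | ⟨i, rfl⟩)
        exacts [hvδ, (hev i).trans hvδ]
      rwa [hall]
    · have hxL : x ∈ AddSubgroup.closure (Set.range e) := by
        by_contra hxL
        exact ((norm_half_sum_le_norm he hx hxL).trans_lt hxδ).not_ge hδv
      exact AddSubgroup.closure_mono
        (Set.inter_subset_inter_left {w | ‖w‖ < δ} (Set.subset_insert v _))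
        (mem_closure_sep_norm_lt he hxL hxδ)
  · rintro _ (rfl | ⟨j, rfl⟩) h
    · refine half_sum_notMem_closure_range he (norm_pos_iff.1 hv) (AddSubgroup.closure_mono ?_ h)
      rintro w ⟨rfl | hw, hwv⟩
      exacts [(lt_irrefl _ hwv).elim, hw]
    · refine notMem_closure_sep_norm_lt_norm he (hne j) (AddSubgroup.closure_mono ?_ h)
      rintro w ⟨rfl | hw, hwj⟩
      exacts [((hev j).not_gt hwj).elim, ⟨hw, hwj⟩]

lemma sqrt_card_div_two_le_norm_half_sum (he : Pairwise fun i j => ⟪e i, e j⟫ = 0)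
    (hone : ∀ i, 1 ≤ ‖e i‖) : √(Fintype.card ι) / 2 ≤ ‖(2 : ℝ)⁻¹ • ∑ i, e i‖ := by
  rw [norm_smul, Real.norm_of_nonneg (by norm_num), div_eq_inv_mul]
  gcongr
  rw [Real.sqrt_le_left (norm_nonneg _), norm_sum_sq_of_pairwise_inner_eq_zero he]
  calc (Fintype.card ι : ℝ) = ∑ _i : ι, (1 : ℝ) := by simp
    _ ≤ ∑ i, ‖e i‖ ^ 2 := Finset.sum_le_sum fun i _ => one_le_pow₀ (hone i)

end Orthogonal

/-- let `e₁, …, e₅` be pairwise orthogonal vectors in a real inner product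
space with `1 ≤ ‖e₁‖ < ‖e₂‖ < ‖e₃‖ < ‖e₄‖ < ‖e₅‖ < √5/2`, let `L = ℤe₁ + ⋯ + ℤe₅` and
`m(l) = ‖l‖`.  Then `Jump(Fil_m^• L) = {‖e₁‖, …, ‖e₅‖}`.  Moreover, with
`v = (e₁ + ⋯ + e₅)/2` and `L' = L + ℤv`, every element of `L'` not in `L` has norm at least
`√5/2`, and `Jump(Fil_m^• L') = {‖e₁‖, …, ‖e₅‖, ‖v‖}`. -/
theorem jumpSet_orthogonal_lattice {E : Type*} [NormedAddCommGroup E]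
    [InnerProductSpace ℝ E] (e : Fin 5 → E)
    (horth : ∀ i j : Fin 5, i ≠ j → ⟪e i, e j⟫ = 0)
    (hone : 1 ≤ ‖e 0‖)
    (hmono : StrictMono fun i : Fin 5 => ‖e i‖)
    (hlt : ‖e 4‖ < Real.sqrt 5 / 2)
    (L : AddSubgroup E) (hL : L = AddSubgroup.closure (Set.range e))
    (v : E) (hv : v = (2 : ℝ)⁻¹ • ∑ i : Fin 5, e i)
    (L' : AddSubgroup E) (hL' : L' = AddSubgroup.closure (insert v (Set.range e))) :
    AddJumpSet (fun x : L => ‖(x : E)‖) = Set.range (fun i : Fin 5 => ‖e i‖) ∧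
    (∀ x : E, x ∈ L' → x ∉ L → Real.sqrt 5 / 2 ≤ ‖x‖) ∧
    AddJumpSet (fun x : L' => ‖(x : E)‖) =
      insert ‖v‖ (Set.range fun i : Fin 5 => ‖e i‖) := by
  subst hL hv hL'
  have hge : ∀ i, 1 ≤ ‖e i‖ := fun i => hone.trans (hmono.monotone (Fin.zero_le i))
  have hne : ∀ i, e i ≠ 0 := fun i => norm_pos_iff.1 (one_pos.trans_le (hge i))
  have hsqrt5 : √5 / 2 ≤ ‖(2 : ℝ)⁻¹ • ∑ i, e i‖ := by
    simpa using sqrt_card_div_two_le_norm_half_sum horth hge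
  have hev : ∀ i, ‖e i‖ < ‖(2 : ℝ)⁻¹ • ∑ i, e i‖ :=
    fun i => (hmono.monotone (Fin.le_last i)).trans_lt (hlt.trans_le hsqrt5)
  exact ⟨addJumpSet_closure_range horth hne,
    fun x hx hxL => hsqrt5.trans (norm_half_sum_le_norm horth hx hxL),
    addJumpSet_closure_insert_half_sum horth hne hev⟩
end

section
/- Let G be a finite group, let H and H' be subgroups of G, and let N be a normal subgroup of G contained in H ∩ H'. Then H and H' are Gassmann-Sunada equivalent in G if and only if H/N and H'/N are Gassmann-Sunada equivalent in G/N. -/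
/-!
For `g ∈ G` count the `x` with `x⁻¹ g x ∈ H` (this is `|H|` times the number of fixed points
of `g` on `G/H`). Double counting the pairs `(s, x)` with `s ∈ S` and `x⁻¹ s x ∈ H` gives
`∑_{s ∈ S} count(s) = |G| · #(H ∩ S)` for conjugation-stable `S`; as the count is a class
function, taking `S` a conjugacy class shows that `H` and `H'` are Gassmann-Sunada equivalent
exactly when their counts agree for every `g`. When `N ≤ H` is normal, the set of such `x` is
the full preimage of the corresponding set for `gN` and `H/N` in `G/N`, so each count in `G` is
`|N|` times the count in `G/N`.
-/

section

open Finset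

variable {G : Type*} [Group G]

def conjugatorsInto (H : Subgroup G) (g : G) : Set G :=
  {x | x⁻¹ * g * x ∈ H}

theorem ConjStable.conj_mem_iff {S : Set G} (hS : ConjStable S) (x : G) {a : G} :
    x⁻¹ * a * x ∈ S ↔ a ∈ S := by
  constructor
  · intro h
    rw [← hS x]
    exact ⟨_, h, by group⟩
  · intro h
    rw [← hS x⁻¹]
    exact ⟨a, h, by group⟩

theorem conjStable_conjugatesOf (g : G) : ConjStable (conjugatesOf g) := by
  intro x
  ext y
  constructor
  · rintro ⟨z, hz, rfl⟩
    exact hz.trans (isConj_iff.2 ⟨x, rfl⟩)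
  · intro hy
    exact ⟨x⁻¹ * y * x, hy.trans (isConj_iff.2 ⟨x⁻¹, by group⟩), by group⟩

theorem IsConj.card_conjugatorsInto_eq (H : Subgroup G) {g g' : G} (h : IsConj g g') :
    Nat.card (conjugatorsInto H g) = Nat.card (conjugatorsInto H g') := by
  obtain ⟨c, rfl⟩ := isConj_iff.1 h
  refine Nat.card_congr ((Equiv.mulLeft c).subtypeEquiv fun x => ?_)
  simp only [conjugatorsInto, Set.mem_ofPred_eq, Equiv.coe_mulLeft]
  rw [show x⁻¹ * g * x = (c * x)⁻¹ * (c * g * c⁻¹) * (c * x) by group]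

theorem ncard_setOf_mem_and_conj_mem (H : Subgroup G) {S : Set G} (hS : ConjStable S) (x : G) :
    {s | s ∈ S ∧ x⁻¹ * s * x ∈ H}.ncard = ((H : Set G) ∩ S).ncard := by
  have : {s | s ∈ S ∧ x⁻¹ * s * x ∈ H} = (fun s => x⁻¹ * s * x) ⁻¹' ((H : Set G) ∩ S) := by
    ext s
    simp [hS.conj_mem_iff, and_comm]
  rw [this, Set.ncard_preimage_of_injective_subset_range (fun a b h => by simpa using h)]
  intro s _
  exact ⟨x * s * x⁻¹, by group⟩

theorem sum_card_conjugatorsInto [Finite G] (H : Subgroup G) (S : Finset G)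
    (hS : ConjStable (S : Set G)) :
    ∑ s ∈ S, Nat.card (conjugatorsInto H s) = Nat.card G * ((H : Set G) ∩ S).ncard := by
  classical
  have := Fintype.ofFinite G
  let r : G → G → Prop := fun s x => x⁻¹ * s * x ∈ H
  calc ∑ s ∈ S, Nat.card (conjugatorsInto H s)
      = ∑ s ∈ S, #(univ.bipartiteAbove r s) := by
        refine Finset.sum_congr rfl fun s _ => ?_
        rw [Nat.card_coe_set_eq, ← Set.ncard_coe_finset, coe_bipartiteAbove]
        simp [conjugatorsInto, r]
    _ = ∑ x : G, #(S.bipartiteBelow r x) := sum_card_bipartiteAbove_eq_sum_card_bipartiteBelow r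
    _ = ∑ _x : G, ((H : Set G) ∩ S).ncard := by
        refine Finset.sum_congr rfl fun x _ => ?_
        rw [← ncard_setOf_mem_and_conj_mem H hS x, ← Set.ncard_coe_finset, coe_bipartiteBelow]
        rfl
    _ = Nat.card G * ((H : Set G) ∩ S).ncard := by
        rw [sum_const, card_univ, smul_eq_mul, Nat.card_eq_fintype_card]

theorem card_conjugatesOf_mul_card_conjugatorsInto [Finite G] (H : Subgroup G) (g : G) :
    Nat.card (conjugatesOf g) * Nat.card (conjugatorsInto H g) =
      Nat.card G * ((H : Set G) ∩ conjugatesOf g).ncard := by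
  set C := (Set.toFinite (conjugatesOf g)).toFinset
  have hC : (C : Set G) = conjugatesOf g := Set.Finite.coe_toFinset _
  have h := sum_card_conjugatorsInto H C (hC ▸ conjStable_conjugatesOf g)
  rw [hC, sum_congr rfl fun s hs =>
    (((Set.Finite.mem_toFinset _).1 hs).card_conjugatorsInto_eq H).symm, sum_const,
    smul_eq_mul] at h
  rwa [Nat.card_coe_set_eq, Set.ncard_eq_toFinset_card _ (Set.toFinite _)]

theorem gassmannEquivalent_iff_card_conjugatorsInto [Finite G] {H H' : Subgroup G} :
    GassmannEquivalent H H' ↔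
      ∀ g, Nat.card (conjugatorsInto H g) = Nat.card (conjugatorsInto H' g) := by
  constructor
  · intro h g
    have : Nonempty (conjugatesOf g) := ⟨⟨g, mem_conjugatesOf_self⟩⟩
    refine Nat.eq_of_mul_eq_mul_left (Nat.card_pos (α := conjugatesOf g)) ?_
    rw [card_conjugatesOf_mul_card_conjugatorsInto, card_conjugatesOf_mul_card_conjugatorsInto,
      h _ (conjStable_conjugatesOf g)]
  · intro h S hS
    set T := (Set.toFinite S).toFinset
    have hT : (T : Set G) = S := Set.Finite.coe_toFinset _
    refine Nat.eq_of_mul_eq_mul_left (Nat.card_pos (α := G)) ?_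
    rw [← hT, ← sum_card_conjugatorsInto H T (hT ▸ hS), ← sum_card_conjugatorsInto H' T (hT ▸ hS)]
    exact sum_congr rfl fun s _ => h s

theorem preimage_conjugatorsInto {Q : Type*} [Group Q] (f : G →* Q) (L : Subgroup Q) (g : G) :
    f ⁻¹' conjugatorsInto L (f g) = conjugatorsInto (L.comap f) g := by
  ext x
  simp [conjugatorsInto]

theorem card_conjugatorsInto_eq_card_mul_quotient {N K : Subgroup G} [N.Normal] (hNK : N ≤ K) (g : G) :
    Nat.card (conjugatorsInto K g) =
      Nat.card N * Nat.card (conjugatorsInto (K.map (QuotientGroup.mk' N)) (g : G ⧸ N)) := by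
  have h := preimage_conjugatorsInto (QuotientGroup.mk' N) (K.map (QuotientGroup.mk' N)) g
  rw [Subgroup.comap_map_eq, QuotientGroup.ker_mk', sup_eq_left.2 hNK] at h
  rw [← QuotientGroup.card_preimage_mk, ← h]
  rfl

end

/-- if `N` is a normal subgroup of a finite group `G` contained in `H ∩ H'`,
then `H` and `H'` are Gassmann-Sunada equivalent in `G` if and only if `H/N` and `H'/N` are
Gassmann-Sunada equivalent in `G/N`. -/
theorem gassmannEquivalent_iff_quotient {G : Type*} [Group G] [Finite G]
    (H H' N : Subgroup G) [N.Normal] (hNH : N ≤ H) (hNH' : N ≤ H') :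
    GassmannEquivalent H H' ↔
      GassmannEquivalent (H.map (QuotientGroup.mk' N)) (H'.map (QuotientGroup.mk' N)) := by
  rw [gassmannEquivalent_iff_card_conjugatorsInto, gassmannEquivalent_iff_card_conjugatorsInto,
    QuotientGroup.mk_surjective.forall]
  simp only [card_conjugatorsInto_eq_card_mul_quotient hNH, card_conjugatorsInto_eq_card_mul_quotient hNH',
    mul_right_inj' Nat.card_pos.ne']
end

section
/- Let G be a finite group, let H and H' be subgroups of G, and let N be a normal subgroup of G contained in H ∩ H'. If H and H' are jump equivalent in G, then H/N and H'/N are jump equivalent in G/N. -/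
/-!
Pull a conjugation-stable set `S` of the quotient back to `f⁻¹' (S ∪ {1})`, which is
conjugation-stable and contains the kernel. Its trace on a subgroup `H ⊇ ker f` generates a
subgroup containing `ker f` whose image is `⟨f(H) ∩ S⟩`, and subgroups containing the kernel are
determined by their images; so the jump condition for `f(H), f(H')` is the one for `H, H'`.
-/

section

variable {G Q : Type*} [Group G] [Group Q]

theorem conjStable_of_conj_mem {S : Set G} (h : ∀ g x, x ∈ S → g * x * g⁻¹ ∈ S) :
    ConjStable S := by
  intro g
  refine (Set.image_subset_iff.2 fun x hx => h g x hx).antisymm fun x hx => ?_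
  exact ⟨g⁻¹ * x * g, by simpa using h g⁻¹ x hx, by group⟩

theorem ConjStable.conj_mem {S : Set G} (hS : ConjStable S) (g : G) {x : G} (hx : x ∈ S) :
    g * x * g⁻¹ ∈ S :=
  hS g ▸ Set.mem_image_of_mem _ hx

theorem ConjStable.insert_one {S : Set G} (hS : ConjStable S) : ConjStable (insert 1 S) :=
  conjStable_of_conj_mem fun g x hx => by
    rcases hx with rfl | hx
    · simp
    · exact Or.inr (hS.conj_mem g hx)

theorem ConjStable.preimage {S : Set Q} (hS : ConjStable S) (f : G →* Q) :
    ConjStable (f ⁻¹' S) :=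
  conjStable_of_conj_mem fun g x hx => by
    simpa only [Set.mem_preimage, map_mul, map_inv] using hS.conj_mem (f g) hx

theorem closure_map_inter_eq_map_closure_inter_preimage_insert_one (f : G →* Q) (K : Subgroup G)
    (S : Set Q) :
    Subgroup.closure ((K.map f : Set Q) ∩ S) =
      (Subgroup.closure ((K : Set G) ∩ f ⁻¹' insert 1 S)).map f := by
  rw [MonoidHom.map_closure, Set.image_inter_preimage, ← Subgroup.coe_map,
    Set.inter_insert_of_mem (K.map f).one_mem, Subgroup.closure_insert_one]

theorem ker_le_closure_inter_preimage_insert_one (f : G →* Q) {K : Subgroup G}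
    (hK : f.ker ≤ K) (S : Set Q) :
    f.ker ≤ Subgroup.closure ((K : Set G) ∩ f ⁻¹' insert 1 S) :=
  fun _ hx => Subgroup.subset_closure ⟨hK hx, Or.inl (f.mem_ker.1 hx)⟩

theorem JumpEquivalent.map {H H' : Subgroup G} (h : JumpEquivalent H H') (f : G →* Q)
    (hH : f.ker ≤ H) (hH' : f.ker ≤ H') : JumpEquivalent (H.map f) (H'.map f) := by
  intro S T hS hT
  have map_eq_iff : ∀ {K : Subgroup G}, f.ker ≤ K →
      (Subgroup.closure ((K.map f : Set Q) ∩ S) = Subgroup.closure ((K.map f : Set Q) ∩ T) ↔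
        Subgroup.closure ((K : Set G) ∩ f ⁻¹' insert 1 S) =
          Subgroup.closure ((K : Set G) ∩ f ⁻¹' insert 1 T)) := fun hK => by
    rw [closure_map_inter_eq_map_closure_inter_preimage_insert_one,
      closure_map_inter_eq_map_closure_inter_preimage_insert_one]
    exact ⟨Subgroup.map_injective_of_ker_le f (ker_le_closure_inter_preimage_insert_one f hK S)
      (ker_le_closure_inter_preimage_insert_one f hK T), congrArg _⟩
  rw [map_eq_iff hH, map_eq_iff hH']
  exact h _ _ (hS.insert_one.preimage f) (hT.insert_one.preimage f)

end

theorem jumpEquivalent_quotient_of_jumpEquivalent_general {G : Type*} [Group G]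
    (H H' N : Subgroup G) [N.Normal] (hNH : N ≤ H) (hNH' : N ≤ H')
    (h : JumpEquivalent H H') :
    JumpEquivalent (H.map (QuotientGroup.mk' N)) (H'.map (QuotientGroup.mk' N)) :=
  h.map _ (by rwa [QuotientGroup.ker_mk']) (by rwa [QuotientGroup.ker_mk'])

/-- if `N` is a normal subgroup of a finite group `G` contained in `H ∩ H'` and
`H`, `H'` are jump equivalent in `G`, then `H/N` and `H'/N` are jump equivalent in `G/N`. -/
theorem jumpEquivalent_quotient_of_jumpEquivalent {G : Type*} [Group G] [Finite G]
    (H H' N : Subgroup G) [N.Normal] (hNH : N ≤ H) (hNH' : N ≤ H')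
    (h : JumpEquivalent H H') :
    JumpEquivalent (H.map (QuotientGroup.mk' N)) (H'.map (QuotientGroup.mk' N)) :=
  jumpEquivalent_quotient_of_jumpEquivalent_general H H' N hNH hNH' h
end

section
/- In the alternating group A₄ on four letters, the unique subgroup V₄ of order 4 and any subgroup C₂ of order 2 are jump equivalent; in particular, (A₄, V₄, C₂) is a jump triple in which the two subgroups have different indices, so jump equivalent subgroups need not have equal index. -/
/-!
If every nontrivial element of `H` is conjugate in `G` to every nontrivial element of `H'`, then
for conjugation-stable `S` the subgroup `⟨H ∩ S⟩` is `H` when `S` meets this conjugacy class and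
`⊥` otherwise, and the same holds for `H'` with the same condition on `S`. In `A₄` the involutions
form a single conjugacy class, and they are the nontrivial elements both of `V₄` (the Sylow
`2`-subgroup, of exponent `2`) and of every subgroup of order `2`. The indices are `3` and `6`.
-/

section JumpEquivalence

variable {G : Type*} [Group G] {H K : Subgroup G} {S T : Set G}

theorem ConjStable.mem_of_isConj (hS : ConjStable S) {a b : G} (ha : a ∈ S) (hab : IsConj a b) :
    b ∈ S := by
  obtain ⟨c, rfl⟩ := isConj_iff.mp hab
  rw [← hS c]
  exact Set.mem_image_of_mem _ ha

theorem inter_subset_one_of_isConj (hK : K ≠ ⊥)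
    (hconj : ∀ a ∈ H, ∀ b ∈ K, a ≠ 1 → b ≠ 1 → IsConj a b) (hS : ConjStable S)
    (hKS : (K : Set G) ∩ S ⊆ {1}) : (H : Set G) ∩ S ⊆ {1} := by
  rintro a ⟨haH, haS⟩
  by_contra ha
  obtain ⟨b, hbK, hb⟩ := K.bot_or_exists_ne_one.resolve_left hK
  exact hb (hKS ⟨hbK, hS.mem_of_isConj haS (hconj a haH b hbK ha hb)⟩)

theorem closure_inter_eq_bot_or_eq_self_of_isConj
    (hconj : ∀ a ∈ H, ∀ b ∈ H, a ≠ 1 → b ≠ 1 → IsConj a b) (hS : ConjStable S) :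
    Subgroup.closure ((H : Set G) ∩ S) = ⊥ ∨ Subgroup.closure ((H : Set G) ∩ S) = H := by
  rw [Subgroup.closure_eq_bot_iff, or_iff_not_imp_left]
  intro hHS
  obtain ⟨a, ⟨haH, haS⟩, ha⟩ := Set.not_subset.mp hHS
  refine le_antisymm (Subgroup.closure_le _ |>.mpr Set.inter_subset_left) fun x hxH => ?_
  rcases eq_or_ne x 1 with rfl | hx
  · exact Subgroup.one_mem _
  · exact Subgroup.subset_closure ⟨hxH, hS.mem_of_isConj haS (hconj a haH x hxH ha hx)⟩

theorem closure_inter_eq_closure_inter_iff_of_isConj (hH : H ≠ ⊥)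
    (hconj : ∀ a ∈ H, ∀ b ∈ H, a ≠ 1 → b ≠ 1 → IsConj a b) (hS : ConjStable S)
    (hT : ConjStable T) :
    Subgroup.closure ((H : Set G) ∩ S) = Subgroup.closure ((H : Set G) ∩ T) ↔
      ((H : Set G) ∩ S ⊆ {1} ↔ (H : Set G) ∩ T ⊆ {1}) := by
  rw [← Subgroup.closure_eq_bot_iff, ← Subgroup.closure_eq_bot_iff]
  rcases closure_inter_eq_bot_or_eq_self_of_isConj hconj hS with hHS | hHS <;>
  rcases closure_inter_eq_bot_or_eq_self_of_isConj hconj hT with hHT | hHT <;>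
  simp [hHS, hHT, hH, hH.symm]

theorem isConj_of_forall_isConj_of_ne_bot (hK : K ≠ ⊥)
    (hconj : ∀ a ∈ H, ∀ b ∈ K, a ≠ 1 → b ≠ 1 → IsConj a b) :
    ∀ a ∈ H, ∀ a' ∈ H, a ≠ 1 → a' ≠ 1 → IsConj a a' := by
  obtain ⟨b, hbK, hb⟩ := K.bot_or_exists_ne_one.resolve_left hK
  exact fun a ha a' ha' h h' => (hconj a ha b hbK h hb).trans (hconj a' ha' b hbK h' hb).symm

theorem jumpEquivalent_of_isConj (hH : H ≠ ⊥) (hK : K ≠ ⊥)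
    (hconj : ∀ a ∈ H, ∀ b ∈ K, a ≠ 1 → b ≠ 1 → IsConj a b) : JumpEquivalent H K := by
  have hconj' : ∀ b ∈ K, ∀ a ∈ H, b ≠ 1 → a ≠ 1 → IsConj b a :=
    fun b hb a ha hb1 ha1 => (hconj a ha b hb ha1 hb1).symm
  have hiff (U : Set G) (hU : ConjStable U) : (H : Set G) ∩ U ⊆ {1} ↔ (K : Set G) ∩ U ⊆ {1} :=
    ⟨inter_subset_one_of_isConj hH hconj' hU, inter_subset_one_of_isConj hK hconj hU⟩
  intro S T hS hT
  rw [closure_inter_eq_closure_inter_iff_of_isConj hH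
      (isConj_of_forall_isConj_of_ne_bot hK hconj) hS hT,
    closure_inter_eq_closure_inter_iff_of_isConj hK
      (isConj_of_forall_isConj_of_ne_bot hH hconj') hS hT,
    hiff S hS, hiff T hT]

end JumpEquivalence

namespace alternatingGroup

variable {α : Type*} [DecidableEq α] [Fintype α]

theorem eq_kleinFour_of_card_eq_four (hα4 : Nat.card α = 4) {V : Subgroup (alternatingGroup α)}
    (hV : Nat.card V = 4) : V = kleinFour α := by
  obtain ⟨P, hVP⟩ := (IsPGroup.of_card (p := 2) (n := 2) hV).exists_le_sylow
  rw [two_sylow_eq_kleinFour_of_card_eq_four hα4 P] at hVP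
  exact Subgroup.eq_of_le_of_card_ge hVP (by rw [hV, kleinFour_card_of_card_eq_four hα4])

theorem sq_eq_one_of_mem_kleinFour (hα4 : Nat.card α = 4) {x : alternatingGroup α}
    (hx : x ∈ kleinFour α) : x ^ 2 = 1 := by
  have := kleinFour_isKleinFour hα4
  simpa [sq] using congrArg Subtype.val (IsKleinFour.mul_self (⟨x, hx⟩ : kleinFour α))

theorem isConj_of_sq_eq_one_fin_four :
    ∀ a b : alternatingGroup (Fin 4), a ≠ 1 → b ≠ 1 → a ^ 2 = 1 → b ^ 2 = 1 → IsConj a b := by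
  decide

end alternatingGroup

theorem sq_eq_one_of_mem_of_card_eq_two {G : Type*} [Group G] {C : Subgroup G}
    (hC : Nat.card C = 2) {x : G} (hx : x ∈ C) : x ^ 2 = 1 :=
  orderOf_dvd_iff_pow_eq_one.mp (hC ▸ C.orderOf_dvd_natCard hx)

theorem Subgroup.index_ne_index_of_card_ne {G : Type*} [Group G] [Finite G] {H K : Subgroup G}
    (h : Nat.card H ≠ Nat.card K) : H.index ≠ K.index := by
  intro hi
  apply h
  have := H.card_mul_index
  rw [hi, ← K.card_mul_index] at this
  exact mul_right_cancel₀ K.index_ne_zero_of_finite this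

/-- in the alternating group `A₄` on four letters there is a unique subgroup
`V₄` of order 4; `V₄` and any subgroup `C₂` of order 2 are jump equivalent, and they have
different indices (so jump equivalent subgroups need not have equal index). -/
theorem alternatingGroup_V4_C2_jumpEquivalent :
    (∃! V : Subgroup ↥(alternatingGroup (Fin 4)), Nat.card V = 4) ∧
    ∀ V C : Subgroup ↥(alternatingGroup (Fin 4)),
      Nat.card V = 4 → Nat.card C = 2 →
        JumpEquivalent V C ∧ V.index ≠ C.index := by
  have h4 : Nat.card (Fin 4) = 4 := Nat.card_fin 4
  have hV_eq {V : Subgroup (alternatingGroup (Fin 4))} (hV : Nat.card V = 4) :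
      V = alternatingGroup.kleinFour (Fin 4) :=
    alternatingGroup.eq_kleinFour_of_card_eq_four h4 hV
  refine ⟨⟨_, alternatingGroup.kleinFour_card_of_card_eq_four h4, fun V hV => hV_eq hV⟩,
    fun V C hV hC => ⟨?_, ?_⟩⟩
  · have hV2 {x} (hx : x ∈ V) : x ^ 2 = 1 :=
      alternatingGroup.sq_eq_one_of_mem_kleinFour h4 (hV_eq hV ▸ hx)
    refine jumpEquivalent_of_isConj ?_ ?_ fun a ha c hc ha1 hc1 =>
      alternatingGroup.isConj_of_sq_eq_one_fin_four a c ha1 hc1 (hV2 ha)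
        (sq_eq_one_of_mem_of_card_eq_two hC hc)
    · rintro rfl; simp at hV
    · rintro rfl; simp at hC
  · exact Subgroup.index_ne_index_of_card_ne (by rw [hV, hC]; decide)
end

section
/- Let H and H' be finite groups of the same order n such that for every divisor d of n the number of elements of order d in H equals the number of elements of order d in H'. Then the images of H and H' under regular embeddings into the symmetric group Perm(Fin n) are Gassmann-Sunada equivalent subgroups of Perm(Fin n). -/
/-- The regular embedding of a group `K` with a bijection `e : K ≃ Fin n` into the symmetric
group `Perm (Fin n)`: the action of `K` on itself by left multiplication, transported along
`e`. -/
def regularEmbedding {K : Type*} [Group K] {n : ℕ} (e : K ≃ Fin n) :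
    K →* Equiv.Perm (Fin n) where
  toFun k := (e.symm.trans (Equiv.mulLeft k)).trans e
  map_one' := by
    ext x
    simp
  map_mul' k k' := by
    ext x
    simp [mul_assoc]

/-! The regular image of an element of order `d` is a product of `n / d` disjoint `d`-cycles, so
its conjugacy class in `Perm (Fin n)` depends only on `d`. The order counts give a bijection
`H ≃ H'` preserving orders, which therefore matches the two images conjugacy class by conjugacy
class. -/

theorem ConjStable.mem_iff_of_isConj {G : Type*} [Group G] {S : Set G} (hS : ConjStable S)
    {a b : G} (hab : IsConj a b) : a ∈ S ↔ b ∈ S := by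
  obtain ⟨c, hc⟩ := isConj_iff.mp hab
  conv_rhs => rw [← hc, ← hS c]
  exact (MulAut.conj c).injective.mem_set_image.symm

namespace Equiv.Perm

variable {α : Type*} [Fintype α] [DecidableEq α]

theorem cycleType_eq_replicate_of_pow_apply_eq_self_iff {σ : Perm α} {m : ℕ} (hm : 1 < m)
    (h : ∀ x j, (σ ^ j) x = x ↔ m ∣ j) :
    σ.cycleType = Multiset.replicate (Fintype.card α / m) m := by
  have hfix (x : α) : σ x ≠ x := by
    simpa [Nat.dvd_one, hm.ne'] using h x 1
  have hmem : ∀ r ∈ σ.cycleType, r = m := by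
    intro r hr
    rw [cycleType_def, Multiset.mem_map] at hr
    obtain ⟨c, hc, rfl⟩ := hr
    obtain ⟨x, hx, -⟩ := (mem_cycleFactorsFinset_iff.mp hc).1
    rw [cycle_is_cycleOf (mem_support.mpr hx) hc, Function.comp_apply,
      ← (isCycle_cycleOf σ (hfix x)).orderOf, ← Nat.dvd_right_iff_eq]
    intro j
    rw [orderOf_dvd_iff_pow_eq_one, (isCycle_cycleOf σ (hfix x)).pow_eq_one_iff'
      (by rw [cycleOf_apply_self]; exact hfix x), cycleOf_pow_apply_self, h]
  have hrep := Multiset.eq_replicate_card.mpr hmem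
  have hsupp : σ.support = Finset.univ :=
    Finset.eq_univ_of_forall fun x => mem_support.mpr (hfix x)
  have hsum : Multiset.card σ.cycleType * m = Fintype.card α := by
    rw [← Finset.card_univ, ← hsupp, ← sum_cycleType, hrep]
    simp
  rw [hrep, ← hsum, Nat.mul_div_cancel _ (by omega)]

end Equiv.Perm

section RegularEmbedding

variable {K : Type*} [Group K] {n : ℕ}

theorem regularEmbedding_apply (e : K ≃ Fin n) (k : K) (x : Fin n) :
    regularEmbedding e k x = e (k * e.symm x) := rfl

theorem regularEmbedding_injective (e : K ≃ Fin n) :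
    Function.Injective (regularEmbedding e) := fun a b h => by
  simpa [regularEmbedding_apply] using congrArg (fun σ => e.symm (σ (e 1))) h

theorem regularEmbedding_pow_apply_eq_self_iff (e : K ≃ Fin n) (k : K) (x : Fin n) (j : ℕ) :
    (regularEmbedding e k ^ j) x = x ↔ orderOf k ∣ j := by
  rw [← map_pow, regularEmbedding_apply, ← Equiv.eq_symm_apply, mul_eq_right,
    orderOf_dvd_iff_pow_eq_one]

theorem cycleType_regularEmbedding (e : K ≃ Fin n) {k : K} (hk : k ≠ 1) :
    (regularEmbedding e k).cycleType = Multiset.replicate (n / orderOf k) (orderOf k) := by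
  have : Finite K := .of_equiv _ e.symm
  simpa only [Fintype.card_fin] using Equiv.Perm.cycleType_eq_replicate_of_pow_apply_eq_self_iff
    (lt_of_le_of_ne (orderOf_pos k) (Ne.symm (mt orderOf_eq_one_iff.mp hk)))
    (regularEmbedding_pow_apply_eq_self_iff e k)

theorem isConj_regularEmbedding_of_orderOf_eq {K' : Type*} [Group K'] (e : K ≃ Fin n)
    (e' : K' ≃ Fin n) {k : K} {k' : K'} (h : orderOf k = orderOf k') :
    IsConj (regularEmbedding e k) (regularEmbedding e' k') := by
  rcases eq_or_ne k 1 with rfl | hk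
  · rw [orderOf_one, eq_comm, orderOf_eq_one_iff] at h
    simp [h]
  · have hk' : k' ≠ 1 := fun h' => hk (orderOf_eq_one_iff.mp (h.trans (h' ▸ orderOf_one)))
    rw [Equiv.Perm.isConj_iff_cycleType_eq, cycleType_regularEmbedding e hk,
      cycleType_regularEmbedding e' hk', h]

end RegularEmbedding

theorem exists_equiv_orderOf_eq {H H' : Type*} [Group H] [Group H'] [Finite H] [Finite H']
    (hcard : Nat.card H = Nat.card H')
    (hcount : ∀ d, d ∣ Nat.card H →
      Nat.card {x : H // orderOf x = d} = Nat.card {x : H' // orderOf x = d}) :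
    ∃ ψ : H ≃ H', ∀ x, orderOf (ψ x) = orderOf x := by
  have hfiber (d : ℕ) : Nonempty ({x : H // orderOf x = d} ≃ {x : H' // orderOf x = d}) := by
    rw [← Finite.card_eq]
    by_cases hd : d ∣ Nat.card H
    · exact hcount d hd
    · have hd' : ¬ d ∣ Nat.card H' := hcard ▸ hd
      have : IsEmpty {x : H // orderOf x = d} :=
        ⟨fun x => hd (x.2 ▸ orderOf_dvd_natCard x.1)⟩
      have : IsEmpty {x : H' // orderOf x = d} :=
        ⟨fun x => hd' (x.2 ▸ orderOf_dvd_natCard x.1)⟩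
      simp
  exact ⟨.ofFiberEquiv fun d => (hfiber d).some, Equiv.ofFiberEquiv_map _⟩

theorem gassmannEquivalent_range_of_isConj {G H H' : Type*} [Group G] [Group H] [Group H']
    {f : H →* G} {f' : H' →* G} (hf : Function.Injective f) (hf' : Function.Injective f')
    (ψ : H ≃ H') (hψ : ∀ x, IsConj (f x) (f' (ψ x))) :
    GassmannEquivalent f.range f'.range := by
  intro S hS
  have hpre : f ⁻¹' S = ψ ⁻¹' (f' ⁻¹' S) := Set.ext fun x => hS.mem_iff_of_isConj (hψ x)
  rw [MonoidHom.coe_range, MonoidHom.coe_range, ← Set.image_preimage_eq_range_inter,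
    ← Set.image_preimage_eq_range_inter, Set.ncard_image_of_injective _ hf,
    Set.ncard_image_of_injective _ hf', hpre, ← ψ.image_symm_eq_preimage,
    Set.ncard_image_of_injective _ ψ.symm.injective]

/-- if `H` and `H'` are finite groups of the same order `n` with the same number
of elements of order `d` for every divisor `d` of `n`, then their images under regular
embeddings into `Perm (Fin n)` are Gassmann-Sunada equivalent. -/
theorem gassmannEquivalent_range_regularEmbedding {n : ℕ}
    {H H' : Type*} [Group H] [Group H'] (e : H ≃ Fin n) (e' : H' ≃ Fin n)
    (hcount : ∀ d : ℕ, d ∣ n →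
      Nat.card {x : H // orderOf x = d} = Nat.card {x : H' // orderOf x = d}) :
    GassmannEquivalent (regularEmbedding e).range (regularEmbedding e').range := by
  have : Finite H := .of_equiv _ e.symm
  have : Finite H' := .of_equiv _ e'.symm
  have hcard : Nat.card H = n := by simp [Nat.card_congr e]
  have hcard' : Nat.card H' = n := by simp [Nat.card_congr e']
  obtain ⟨ψ, hψ⟩ := exists_equiv_orderOf_eq (hcard.trans hcard'.symm) (hcard ▸ hcount)
  exact gassmannEquivalent_range_of_isConj (regularEmbedding_injective e)
    (regularEmbedding_injective e') ψ
    fun x => isConj_regularEmbedding_of_orderOf_eq e e' (hψ x).symm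
end

section
/- Let k be a finite field with q elements and let V be a k-vector space of finite dimension d ≥ 1. Let v₀ ∈ V be a nonzero vector and let φ : V → k be a nonzero linear functional. Let H = {g ∈ GL(V) : g v₀ = v₀} and H' = {g ∈ GL(V) : φ ∘ g = φ}. Then H and H' are Gassmann-Sunada equivalent subgroups of GL(V), and if d ≥ 2 and (q,d) ≠ (2,2) then H and H' are not conjugate in GL(V). -/
/-!
For `g ∈ GL(V)`, the vectors fixed by `g` form `ker (g⁻¹ - 1)` and, for the contragredient
action `g • ψ = ψ ∘ g⁻¹`, the fixed functionals form `ker (g⁻¹ - 1)ᵀ`. These subspaces have the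
same dimension, so `g` fixes as many nonzero vectors as nonzero functionals. `GL(V)` is
transitive on both sets, with point stabilizers `H` and `H'`, and for a transitive action,
counting the pairs `(g, x)` with `g ∈ S` and `g • x = x` gives
`#(Stab x ∩ S) · #X = ∑_{g ∈ S} #Fix(g)` whenever `S` is conjugation-stable. Hence
`#(H ∩ S) = #(H' ∩ S)`.

If `H` were conjugate to `H'`, then `H'` would be the stabilizer of a nonzero vector `w`. When
`d ≥ 2` and `(q, d) ≠ (2, 2)`, some dilatransvection `x ↦ x + ψ x • u` with `φ u = 0` (so it
lies in `H'`) has `ψ w ≠ 0`, so it moves `w`.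
-/

open MulAction Module LinearMap

section GroupAction

variable {G X Y : Type*} [Group G] [MulAction G X] [MulAction G Y] {S : Set G}

theorem ConjStable.ncard_stabilizer_inter_of_mem_orbit (hS : ConjStable S) {x y : X}
    (hy : y ∈ orbit G x) :
    ((stabilizer G y : Set G) ∩ S).ncard = ((stabilizer G x : Set G) ∩ S).ncard := by
  obtain ⟨g, rfl⟩ := hy
  have hinj : Function.Injective fun h : G => g * h * g⁻¹ := fun a b h => by simpa using h
  calc ((stabilizer G (g • x) : Set G) ∩ S).ncard
      = ((fun h => g * h * g⁻¹) '' ((stabilizer G x : Set G) ∩ S)).ncard := by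
        rw [Set.image_inter hinj, hS g, stabilizer_smul_eq_stabilizer_map_conj, Subgroup.coe_map]
        rfl
    _ = ((stabilizer G x : Set G) ∩ S).ncard := Set.ncard_image_of_injective _ hinj

variable (S) in
def fixedPairs (O : Set X) : Set (G × X) := {p | p.1 ∈ S ∧ p.2 ∈ O ∧ p.1 • p.2 = p.2}

theorem ConjStable.ncard_fixedPairs_orbit [Finite G] [Finite X] (hS : ConjStable S) (x : X) :
    (fixedPairs S (orbit G x)).ncard =
      (orbit G x).ncard * ((stabilizer G x : Set G) ∩ S).ncard := by
  have := Fintype.ofFinite (orbit G x)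
  let e : fixedPairs S (orbit G x) ≃ Σ y : orbit G x, ↥((stabilizer G (y : X) : Set G) ∩ S) :=
    { toFun p := ⟨⟨p.1.2, p.2.2.1⟩, p.1.1, p.2.2.2, p.2.1⟩
      invFun q := ⟨(q.2.1, q.1.1), q.2.2.2, q.1.2, q.2.2.1⟩
      left_inv _ := rfl
      right_inv _ := rfl }
  rw [← Nat.card_coe_set_eq, Nat.card_congr e, Nat.card_sigma]
  simp_rw [Nat.card_coe_set_eq, hS.ncard_stabilizer_inter_of_mem_orbit (Subtype.prop _)]
  rw [Finset.sum_const, Finset.card_univ, smul_eq_mul, ← Nat.card_eq_fintype_card,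
    Nat.card_coe_set_eq]

theorem ncard_fixedPairs_eq_sum [Finite X] [Fintype S] (O : Set X) :
    (fixedPairs S O).ncard = ∑ g : S, (fixedBy X (g : G) ∩ O).ncard := by
  let e : fixedPairs S O ≃ Σ g : S, ↥(fixedBy X (g : G) ∩ O) :=
    { toFun p := ⟨⟨p.1.1, p.2.1⟩, p.1.2, p.2.2.2, p.2.2.1⟩
      invFun q := ⟨(q.1.1, q.2.1), q.1.2, q.2.2.2, q.2.2.1⟩
      left_inv _ := rfl
      right_inv _ := rfl }
  simp_rw [← Nat.card_coe_set_eq, Nat.card_congr e, Nat.card_sigma]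

theorem gassmannEquivalent_stabilizer_of_ncard_fixedBy_eq [Finite G] [Finite X] [Finite Y]
    (x : X) (y : Y)
    (h : ∀ g : G, (fixedBy X g ∩ orbit G x).ncard = (fixedBy Y g ∩ orbit G y).ncard) :
    GassmannEquivalent (stabilizer G x) (stabilizer G y) := by
  intro S hS
  have := Fintype.ofFinite S
  have horbit : (orbit G x).ncard = (orbit G y).ncard := by simpa using h 1
  have hpos : 0 < (orbit G x).ncard := (Set.ncard_pos).2 ⟨x, mem_orbit_self x⟩
  have hcount : (fixedPairs S (orbit G x)).ncard = (fixedPairs S (orbit G y)).ncard := by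
    simp_rw [ncard_fixedPairs_eq_sum, h]
  rw [hS.ncard_fixedPairs_orbit, hS.ncard_fixedPairs_orbit, ← horbit] at hcount
  exact Nat.eq_of_mul_eq_mul_left hpos hcount

end GroupAction

section LinearAlgebra

theorem Submodule.ncard_coe_inter_ne_zero {R W : Type*} [Semiring R] [AddCommMonoid W]
    [Module R W] (p : Submodule R W) : ((p : Set W) ∩ {w | w ≠ 0}).ncard = Nat.card p - 1 := by
  rw [← Set.compl_singleton_eq, ← Set.sdiff_eq, Set.ncard_sdiff_singleton_of_mem p.zero_mem,
    ← Nat.card_coe_set_eq]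
  rfl

theorem exists_linearEquiv_apply_eq {K V : Type*} [DivisionRing K] [AddCommGroup V] [Module K V]
    {v w : V} (hv : v ≠ 0) (hw : w ≠ 0) : ∃ e : V ≃ₗ[K] V, e v = w := by
  let f := (LinearEquiv.toSpanNonzeroSingleton K V v hv).symm ≪≫ₗ
    LinearEquiv.toSpanNonzeroSingleton K V w hw
  obtain ⟨e, he⟩ := Submodule.exists_linearEquiv_restrict_eq f
  refine ⟨e, ?_⟩
  have := he (LinearEquiv.toSpanNonzeroSingleton K V v hv 1)
  rw [LinearEquiv.trans_apply, LinearEquiv.symm_apply_apply] at this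
  simpa using this.symm

theorem exists_ne_zero_isUnit_one_add {K : Type*} [Field K] [Finite K] (hK : Nat.card K ≠ 2) :
    ∃ s : K, s ≠ 0 ∧ IsUnit (1 + s) := by
  by_contra! h
  have hsub : (Set.univ : Set K) ⊆ {0, -1} := fun s _ => by
    by_cases hs : s = 0
    · exact Or.inl hs
    · exact Or.inr (eq_neg_of_add_eq_zero_right (not_not.1 ((h s hs).imp isUnit_iff_ne_zero.2)))
  have := (Set.ncard_le_ncard hsub).trans (Set.ncard_insert_le _ _)
  rw [Set.ncard_univ, Set.ncard_singleton] at this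
  have := Finite.one_lt_card (α := K)
  omega

variable {K V : Type*} [Field K] [AddCommGroup V] [Module K V] [FiniteDimensional K V]

theorem Module.Dual.exists_linearEquiv_comp_eq {φ ψ : Dual K V} (hφ : φ ≠ 0) (hψ : ψ ≠ 0) :
    ∃ e : V ≃ₗ[K] V, φ ∘ₗ e = ψ := by
  obtain ⟨u, hu⟩ := exists_linearEquiv_apply_eq (K := K) hφ hψ
  -- the transpose of `u`, read through `V ≃ V**`
  refine ⟨evalEquiv K V ≪≫ₗ u.dualMap ≪≫ₗ (evalEquiv K V).symm, ?_⟩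
  ext v
  simp [hu]

theorem LinearMap.finrank_ker_dualMap (f : Module.End K V) :
    finrank K (ker f.dualMap) = finrank K (ker f) := by
  have h := f.finrank_range_add_finrank_ker
  have h' := f.dualMap.finrank_range_add_finrank_ker
  rw [finrank_range_dualMap_eq_finrank_range, Subspace.dual_finrank_eq] at h'
  omega

theorem LinearMap.natCard_ker_dualMap [Finite K] (f : Module.End K V) :
    Nat.card (ker f.dualMap) = Nat.card (ker f) := by
  rw [natCard_eq_pow_finrank (K := K) (V := ker f.dualMap),
    natCard_eq_pow_finrank (K := K) (V := ker f), finrank_ker_dualMap]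

theorem Module.Dual.exists_linearEquiv_comp_eq_self_apply_ne [Finite K] (hd : 2 ≤ finrank K V)
    (hKd : ¬(Nat.card K = 2 ∧ finrank K V = 2)) {w : V} (hw : w ≠ 0) (φ : Dual K V) :
    ∃ e : V ≃ₗ[K] V, φ ∘ₗ e = φ ∧ e w ≠ w := by
  suffices ∃ (ψ : Dual K V) (u : V), φ u = 0 ∧ u ≠ 0 ∧ ψ w ≠ 0 ∧ IsUnit (1 + ψ u) by
    obtain ⟨ψ, u, hφu, hu, hψw, hunit⟩ := this
    refine ⟨LinearEquiv.dilatransvection hunit, ?_, ?_⟩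
    · ext x
      simp [transvection.apply, hφu]
    · rw [LinearEquiv.dilatransvection.apply, Ne, add_eq_left, smul_eq_zero, not_or]
      exact ⟨hψw, hu⟩
  obtain ⟨ψ₀, hψ₀⟩ := Projective.exists_dual_eq_one K hw
  by_cases hW : ker φ ⊓ ker ψ₀ = ⊥
  · -- `V` embeds in `K × K` via `(φ, ψ₀)`, so `d = 2`, and then `q ≠ 2`.
    have hd2 : finrank K V = 2 := by
      have h := (φ.prod ψ₀).finrank_range_add_finrank_ker
      rw [ker_prod, hW, finrank_bot] at h
      have := Submodule.finrank_le (range (φ.prod ψ₀))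
      rw [finrank_prod, finrank_self] at this
      omega
    obtain ⟨u, hu, hu0⟩ := Submodule.exists_mem_ne_zero_of_ne_bot
      (ker_ne_bot_of_finrank_lt (f := φ) (by rw [finrank_self]; omega))
    have hψ₀u : ψ₀ u ≠ 0 := fun h => hu0 <| (Submodule.mem_bot K).1 <| hW ▸ ⟨hu, h⟩
    obtain ⟨s, hs, hs1⟩ := exists_ne_zero_isUnit_one_add fun hK => hKd ⟨hK, hd2⟩
    refine ⟨ψ₀, (s * (ψ₀ u)⁻¹) • u, ?_, smul_ne_zero (by simp [hs, hψ₀u]) hu0, by simp [hψ₀], ?_⟩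
    · rw [map_smul, mem_ker.1 hu, smul_zero]
    · simpa [hψ₀u] using hs1
  · obtain ⟨u, ⟨hφu, hψ₀u⟩, hu0⟩ := Submodule.exists_mem_ne_zero_of_ne_bot hW
    exact ⟨ψ₀, u, hφu, hu0, by simp [hψ₀], by simp [mem_ker.1 hψ₀u]⟩

end LinearAlgebra

namespace LinearMap.GeneralLinearGroup

section Semiring

variable {R M : Type*} [CommSemiring R] [AddCommMonoid M] [Module R M]

instance : MulAction (GeneralLinearGroup R M) (Dual R M) where
  smul g f := f ∘ₗ ((g⁻¹ : GeneralLinearGroup R M) : M →ₗ[R] M)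
  one_smul _ := rfl
  mul_smul _ _ _ := rfl

theorem smul_dual_def (g : GeneralLinearGroup R M) (f : Dual R M) :
    g • f = f ∘ₗ ((g⁻¹ : GeneralLinearGroup R M) : M →ₗ[R] M) :=
  rfl

theorem mem_stabilizer_dual_iff {g : GeneralLinearGroup R M} {f : Dual R M} :
    g ∈ stabilizer (GeneralLinearGroup R M) f ↔ f ∘ₗ (g : M →ₗ[R] M) = f := by
  rw [← Subgroup.inv_mem_iff, mem_stabilizer_iff, smul_dual_def, inv_inv]

end Semiring

variable {K V : Type*} [Field K] [AddCommGroup V] [Module K V]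

theorem orbit_eq_ne_zero {v : V} (hv : v ≠ 0) :
    orbit (GeneralLinearGroup K V) v = {w | w ≠ 0} := by
  ext w
  refine ⟨?_, fun hw => ?_⟩
  · rintro ⟨g, rfl⟩
    exact (smul_ne_zero_iff_ne g).2 hv
  · obtain ⟨e, he⟩ := exists_linearEquiv_apply_eq (K := K) hv hw
    exact ⟨ofLinearEquiv e, he⟩

theorem orbit_dual_eq_ne_zero [FiniteDimensional K V] {φ : Dual K V} (hφ : φ ≠ 0) :
    orbit (GeneralLinearGroup K V) φ = {ψ | ψ ≠ 0} := by
  ext ψ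
  refine ⟨?_, fun hψ => ?_⟩
  · rintro ⟨g, rfl⟩ h
    refine hφ ?_
    rw [← inv_smul_smul g φ]
    exact (congrArg (g⁻¹ • ·) h).trans (zero_comp _)
  · obtain ⟨e, he⟩ := Module.Dual.exists_linearEquiv_comp_eq hφ hψ
    exact ⟨(ofLinearEquiv e)⁻¹, he⟩

theorem fixedBy_eq_ker (g : GeneralLinearGroup K V) :
    fixedBy V g = ker ((g⁻¹ : GeneralLinearGroup K V) - 1 : Module.End K V) := by
  rw [← fixedBy_inv]
  ext v
  rw [mem_fixedBy, SetLike.mem_coe, mem_ker, sub_apply, sub_eq_zero]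
  rfl

theorem fixedBy_dual_eq_ker_dualMap (g : GeneralLinearGroup K V) :
    fixedBy (Dual K V) g = ker ((g⁻¹ : GeneralLinearGroup K V) - 1 : Module.End K V).dualMap := by
  ext ψ
  simp [smul_dual_def, dualMap_apply', comp_sub, sub_eq_zero, Module.End.one_eq_id]

variable [FiniteDimensional K V] [Finite K]

theorem ncard_fixedBy_dual_inter_ne_zero (g : GeneralLinearGroup K V) :
    (fixedBy (Dual K V) g ∩ {ψ | ψ ≠ 0}).ncard = (fixedBy V g ∩ {v | v ≠ 0}).ncard := by
  rw [fixedBy_dual_eq_ker_dualMap, fixedBy_eq_ker, Submodule.ncard_coe_inter_ne_zero,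
    Submodule.ncard_coe_inter_ne_zero, natCard_ker_dualMap]

theorem gassmannEquivalent_stabilizer_stabilizer_dual {v : V} (hv : v ≠ 0) {φ : Dual K V}
    (hφ : φ ≠ 0) :
    GassmannEquivalent (stabilizer (GeneralLinearGroup K V) v)
      (stabilizer (GeneralLinearGroup K V) φ) := by
  have := Module.finite_of_finite K (M := V)
  have := Module.finite_of_finite K (M := Dual K V)
  have := Module.finite_of_finite K (M := Module.End K V)
  refine gassmannEquivalent_stabilizer_of_ncard_fixedBy_eq v φ fun g => ?_
  rw [orbit_eq_ne_zero hv, orbit_dual_eq_ne_zero hφ, ncard_fixedBy_dual_inter_ne_zero]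

theorem stabilizer_dual_not_le_stabilizer (hd : 2 ≤ finrank K V)
    (hKd : ¬(Nat.card K = 2 ∧ finrank K V = 2)) {w : V} (hw : w ≠ 0) (φ : Dual K V) :
    ¬ stabilizer (GeneralLinearGroup K V) φ ≤ stabilizer (GeneralLinearGroup K V) w := by
  obtain ⟨e, he, hew⟩ := Module.Dual.exists_linearEquiv_comp_eq_self_apply_ne hd hKd hw φ
  exact fun hle => hew (hle (mem_stabilizer_dual_iff.2 he) : ofLinearEquiv e • w = w)

end LinearMap.GeneralLinearGroup

theorem gassmannEquivalent_stabilizers_GL_general {k : Type*} [Field k] [Fintype k]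
    {q d : ℕ} (hq : Fintype.card k = q)
    {V : Type*} [AddCommGroup V] [Module k V] [FiniteDimensional k V]
    (hd : Module.finrank k V = d)
    (v₀ : V) (hv₀ : v₀ ≠ 0) (φ : V →ₗ[k] k) (hφ : φ ≠ 0)
    (H H' : Subgroup (LinearMap.GeneralLinearGroup k V))
    (hH : ∀ g : LinearMap.GeneralLinearGroup k V, g ∈ H ↔ (g : V →ₗ[k] V) v₀ = v₀)
    (hH' : ∀ g : LinearMap.GeneralLinearGroup k V, g ∈ H' ↔ φ.comp (g : V →ₗ[k] V) = φ) :
    GassmannEquivalent H H' ∧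
      (2 ≤ d → ¬(q = 2 ∧ d = 2) →
        ¬ ∃ g : LinearMap.GeneralLinearGroup k V,
            H.map (MulAut.conj g).toMonoidHom = H') := by
  obtain rfl : H = stabilizer _ v₀ := Subgroup.ext hH
  obtain rfl : H' = stabilizer _ φ :=
    Subgroup.ext fun g => (hH' g).trans GeneralLinearGroup.mem_stabilizer_dual_iff.symm
  subst hq hd
  refine ⟨GeneralLinearGroup.gassmannEquivalent_stabilizer_stabilizer_dual hv₀ hφ,
    fun hd2 hqd ⟨g, hg⟩ => ?_⟩
  rw [← stabilizer_smul_eq_stabilizer_map_conj] at hg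
  rw [Fintype.card_eq_nat_card] at hqd
  exact GeneralLinearGroup.stabilizer_dual_not_le_stabilizer hd2 hqd
    ((smul_ne_zero_iff_ne g).2 hv₀) φ hg.ge

/-- let `k` be a finite field with `q` elements, `V` a `k`-vector space of
finite dimension `d ≥ 1`, `H` the stabilizer in `GL(V)` of a nonzero vector `v₀`, and `H'`
the stabilizer of a nonzero linear functional `φ`.  Then `H` and `H'` are Gassmann-Sunada
equivalent in `GL(V)`, and if `d ≥ 2` and `(q,d) ≠ (2,2)` they are not conjugate. -/
theorem gassmannEquivalent_stabilizers_GL {k : Type*} [Field k] [Fintype k]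
    {q d : ℕ} (hq : Fintype.card k = q)
    {V : Type*} [AddCommGroup V] [Module k V] [FiniteDimensional k V]
    (hd : Module.finrank k V = d) (hd1 : 1 ≤ d)
    (v₀ : V) (hv₀ : v₀ ≠ 0) (φ : V →ₗ[k] k) (hφ : φ ≠ 0)
    (H H' : Subgroup (LinearMap.GeneralLinearGroup k V))
    (hH : ∀ g : LinearMap.GeneralLinearGroup k V, g ∈ H ↔ (g : V →ₗ[k] V) v₀ = v₀)
    (hH' : ∀ g : LinearMap.GeneralLinearGroup k V, g ∈ H' ↔ φ.comp (g : V →ₗ[k] V) = φ) :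
    GassmannEquivalent H H' ∧
      (2 ≤ d → ¬(q = 2 ∧ d = 2) →
        ¬ ∃ g : LinearMap.GeneralLinearGroup k V,
            H.map (MulAut.conj g).toMonoidHom = H') :=
  gassmannEquivalent_stabilizers_GL_general hq hd v₀ hv₀ φ hφ H H' hH hH'
end

section
/- Let N = C₄ × C₂ = ⟨a, b : a⁴ = b² = 1, ab = ba⟩, let H = N × ⟨c : c² = 1⟩ be the direct product, and let H' = N ⋊ ⟨c : c² = 1⟩ be the semidirect product in which c acts on N by a ↦ a and b ↦ a²b. Then H and H' are non-isomorphic groups of order 16, and for every divisor d of 16 the number of elements of order d in H equals the number of elements of order d in H'. -/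
/-!
Both groups satisfy one presentation: `a⁴ = b² = c² = 1`, `a` central, `c b = a^(2e) b c`, with
`e = 0` for `H` and `e = 1` for `H'`. Since the group has order 16, the 16 words `a^i b^j c^k`
(`i < 4`, `j, k < 2`) are pairwise distinct, and `(a^i b^j c^k)² = a^(2(i + e j k))`. So every
element has order 1, 2 or 4, and a nontrivial one has order 2 exactly when `i + e j k` is even:
in both groups one element has order 1, seven have order 2 and eight have order 4. The groups are
not isomorphic: `H` is abelian, while `c' b' = a'² b' c' ≠ b' c'` because `a'² ≠ 1`.
-/

/-- Hypotheses pinning down `H ≅ C₄ × C₂ × C₂ = ⟨a,b,c : a⁴ = b² = c² = 1, all commute⟩`: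
a group of order 16 generated by elements `a, b, c` satisfying these relations is
isomorphic to `C₄ × C₂ × C₂`. -/
structure IsC4xC2xC2 {H : Type*} [Group H] (a b c : H) : Prop where
  card : Nat.card H = 16
  ha : a ^ 4 = 1
  hb : b ^ 2 = 1
  hc : c ^ 2 = 1
  hab : a * b = b * a
  hac : a * c = c * a
  hbc : c * b = b * c
  gen : Subgroup.closure {a, b, c} = ⊤

/-- Hypotheses pinning down `H' ≅ (C₄ × C₂) ⋊ C₂ = ⟨a,b,c : a⁴ = b² = c² = 1, ab = ba,
ac = ca, cbc⁻¹ = a²b⟩`, the semidirect product in which `c` acts on `N = C₄ × C₂` by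
`a ↦ a`, `b ↦ a²b`: a group of order 16 generated by elements `a, b, c` satisfying these
relations is isomorphic to this semidirect product. -/
structure IsC4xC2SemidirectC2 {H : Type*} [Group H] (a b c : H) : Prop where
  card : Nat.card H = 16
  ha : a ^ 4 = 1
  hb : b ^ 2 = 1
  hc : c ^ 2 = 1
  hab : a * b = b * a
  hac : a * c = c * a
  hbc : c * b * c⁻¹ = a ^ 2 * b
  gen : Subgroup.closure {a, b, c} = ⊤

open Subgroup

section PowerLemmas

variable {G : Type*} [Group G]

theorem pow_zmod_val_add {n : ℕ} [NeZero n] {x : G} (hx : x ^ n = 1) (i j : ZMod n) :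
    x ^ (i + j).val = x ^ i.val * x ^ j.val := by
  rw [ZMod.val_add, ← pow_eq_pow_mod _ hx, pow_add]

theorem pow_zmod_val_natCast {n : ℕ} {x : G} (hx : x ^ n = 1) (m : ℕ) :
    x ^ (m : ZMod n).val = x ^ m := by
  rw [ZMod.val_natCast, ← pow_eq_pow_mod _ hx]

theorem pow_two_mul_eq_one_iff {x : G} (h4 : x ^ 4 = 1) (h2 : x ^ 2 ≠ 1) (n : ℕ) :
    x ^ (2 * n) = 1 ↔ Even n := by
  rcases Nat.even_or_odd' n with ⟨m, rfl | rfl⟩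
  · rw [show 2 * (2 * m) = 4 * m by ring, pow_mul, h4, one_pow]
    simp
  · rw [show 2 * (2 * m + 1) = 4 * m + 2 by ring, pow_add, pow_mul, h4, one_pow, one_mul]
    simpa using h2

open scoped Classical in
theorem orderOf_eq_of_pow_four_eq_one {x : G} (h4 : x ^ 4 = 1) :
    orderOf x = if x = 1 then 1 else if x ^ 2 = 1 then 2 else 4 := by
  split_ifs with h1 h2
  · rw [h1, orderOf_one]
  · exact orderOf_eq_prime_pow (p := 2) (n := 0) (by simpa using h1) h2
  · exact orderOf_eq_prime_pow (p := 2) (n := 1) h2 h4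

theorem mul_pow_of_mul_eq_mul_mul {x y z : G} (hz : Commute z x) (h : y * x = z * (x * y))
    (n : ℕ) : y * x ^ n = z ^ n * (x ^ n * y) := by
  have : SemiconjBy y x (z * x) := by rw [SemiconjBy, h, mul_assoc]
  rw [(this.pow_right n).eq, hz.mul_pow, mul_assoc]

end PowerLemmas

structure IsC4xC2xC2Twisted {G : Type*} [Group G] (e : ℕ) (a b c : G) : Prop where
  card : Nat.card G = 16
  ha : a ^ 4 = 1
  hb : b ^ 2 = 1
  hc : c ^ 2 = 1
  hab : a * b = b * a
  hac : a * c = c * a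
  hcb : c * b = a ^ (2 * e) * (b * c)
  gen : closure {a, b, c} = ⊤

theorem IsC4xC2xC2.isTwisted {H : Type*} [Group H] {a b c : H} (h : IsC4xC2xC2 a b c) :
    IsC4xC2xC2Twisted 0 a b c where
  __ := h
  hcb := by rw [mul_zero, pow_zero, one_mul, h.hbc]

theorem IsC4xC2SemidirectC2.isTwisted {H : Type*} [Group H] {a b c : H}
    (h : IsC4xC2SemidirectC2 a b c) : IsC4xC2xC2Twisted 1 a b c where
  __ := h
  hcb := by rw [mul_one, ← mul_assoc, ← h.hbc, inv_mul_cancel_right]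

def normalForm {G : Type*} [Group G] (a b c : G) (v : ZMod 4 × ZMod 2 × ZMod 2) : G :=
  a ^ v.1.val * b ^ v.2.1.val * c ^ v.2.2.val

theorem normalForm_zero {G : Type*} [Group G] {a b c : G} : normalForm a b c 0 = 1 := by
  simp [normalForm]

def normalFormOrder (e : ℕ) (v : ZMod 4 × ZMod 2 × ZMod 2) : ℕ :=
  if v = 0 then 1 else if Even (v.1.val + e * (v.2.1.val * v.2.2.val)) then 2 else 4

theorem card_normalFormOrder_zero_eq_one {d : ℕ} (hd : d ∣ 16) :
    Nat.card {v // normalFormOrder 0 v = d} = Nat.card {v // normalFormOrder 1 v = d} := by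
  have hd' : d ∈ Nat.divisors 16 := Nat.mem_divisors.2 ⟨hd, by norm_num⟩
  simp only [Nat.card_eq_fintype_card]
  clear hd
  revert d
  decide

namespace IsC4xC2xC2Twisted

variable {G : Type*} [Group G] {e : ℕ} {a b c : G}

theorem commute_a (h : IsC4xC2xC2Twisted e a b c) (x : G) : Commute a x := by
  have hS : {a, b, c} ⊆ (centralizer {a} : Set G) := by
    simp [Set.insert_subset_iff, mem_centralizer_singleton_iff, h.hab, h.hac]
  have hx : x ∈ centralizer {a} := (closure_le _).2 hS (h.gen ▸ mem_top x)
  exact (mem_centralizer_singleton_iff.1 hx).symm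

theorem a_mul_normalForm (h : IsC4xC2xC2Twisted e a b c) (i : ZMod 4) (j k : ZMod 2) :
    a * normalForm a b c (i, j, k) = normalForm a b c (1 + i, j, k) := by
  simp only [normalForm, pow_zmod_val_add h.ha, ZMod.val_one_eq_one_mod, Nat.reduceMod, pow_one,
    mul_assoc]

theorem b_mul_normalForm (h : IsC4xC2xC2Twisted e a b c) (i : ZMod 4) (j k : ZMod 2) :
    b * normalForm a b c (i, j, k) = normalForm a b c (i, 1 + j, k) := by
  simp only [normalForm, pow_zmod_val_add h.hb, ZMod.val_one_eq_one_mod, Nat.reduceMod, pow_one,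
    ← mul_assoc, ← ((h.commute_a b).pow_left i.val).eq]

theorem c_mul_normalForm (h : IsC4xC2xC2Twisted e a b c) (i : ZMod 4) (j k : ZMod 2) :
    c * normalForm a b c (i, j, k) =
      normalForm a b c (i + ((2 * e * j.val : ℕ) : ZMod 4), j, 1 + k) := by
  have hcbj := mul_pow_of_mul_eq_mul_mul ((h.commute_a b).pow_left _) h.hcb j.val
  simp only [normalForm, pow_zmod_val_add h.ha, pow_zmod_val_natCast h.ha,
    pow_zmod_val_add h.hc, ZMod.val_one_eq_one_mod, Nat.reduceMod, pow_one, ← mul_assoc,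
    ← ((h.commute_a c).pow_left i.val).eq]
  rw [mul_assoc _ c, hcbj, ← pow_mul]
  simp only [mul_assoc]

theorem normalForm_surjective (h : IsC4xC2xC2Twisted e a b c) :
    Function.Surjective (normalForm a b c) := by
  have : Finite G := Nat.finite_of_card_ne_zero (by rw [h.card]; norm_num)
  intro x
  have hx : x ∈ Submonoid.closure {a, b, c} := by
    rw [← closure_toSubmonoid_of_finite, h.gen]
    exact mem_top x
  induction hx using Submonoid.closure_induction_left with
  | one => exact ⟨0, normalForm_zero⟩
  | mul_left g hg y _ ih =>
    obtain ⟨⟨i, j, k⟩, rfl⟩ := ih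
    rcases hg with rfl | rfl | rfl
    exacts [⟨_, (h.a_mul_normalForm i j k).symm⟩, ⟨_, (h.b_mul_normalForm i j k).symm⟩,
      ⟨_, (h.c_mul_normalForm i j k).symm⟩]

theorem normalForm_bijective (h : IsC4xC2xC2Twisted e a b c) :
    Function.Bijective (normalForm a b c) :=
  h.normalForm_surjective.bijective_of_nat_card_le (by simp [h.card])

theorem normalForm_eq_one_iff (h : IsC4xC2xC2Twisted e a b c) {v} :
    normalForm a b c v = 1 ↔ v = 0 := by
  rw [← normalForm_zero, h.normalForm_bijective.injective.eq_iff]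

theorem sq_a_ne_one (h : IsC4xC2xC2Twisted e a b c) : a ^ 2 ≠ 1 := by
  have : normalForm a b c (2, 0, 0) = a ^ 2 := by
    simp only [normalForm, ZMod.val_zero, pow_zero, mul_one]
    rfl
  rw [← this, Ne, h.normalForm_eq_one_iff]
  decide

theorem sq_b_mul_c (h : IsC4xC2xC2Twisted e a b c) : (b * c) ^ 2 = a ^ (2 * e) := by
  rw [sq, mul_assoc, ← mul_assoc c, h.hcb]
  simp only [← mul_assoc, ← ((h.commute_a b).pow_left _).eq]
  rw [mul_assoc _ b b, ← sq, h.hb, mul_one, mul_assoc, ← sq, h.hc, mul_one]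

theorem normalForm_sq (h : IsC4xC2xC2Twisted e a b c) (i : ZMod 4) (j k : ZMod 2) :
    normalForm a b c (i, j, k) ^ 2 = a ^ (2 * (i.val + e * (j.val * k.val))) := by
  have hbc : (b ^ j.val * c ^ k.val) ^ 2 = a ^ (2 * (e * (j.val * k.val))) := by
    have h01 : ∀ x : ZMod 2, x = 0 ∨ x = 1 := by decide
    rcases h01 j with rfl | rfl <;> rcases h01 k with rfl | rfl
    all_goals simp [ZMod.val_one_eq_one_mod, h.hb, h.hc, h.sq_b_mul_c]
  rw [normalForm, mul_assoc, ((h.commute_a _).pow_left _).mul_pow, hbc, ← pow_mul, ← pow_add,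
    mul_add, mul_comm i.val]

theorem orderOf_normalForm (h : IsC4xC2xC2Twisted e a b c) (v : ZMod 4 × ZMod 2 × ZMod 2) :
    orderOf (normalForm a b c v) = normalFormOrder e v := by
  obtain ⟨i, j, k⟩ := v
  have hsq := h.normalForm_sq i j k
  have h4 : normalForm a b c (i, j, k) ^ 4 = 1 :=
    calc normalForm a b c (i, j, k) ^ 4 = (normalForm a b c (i, j, k) ^ 2) ^ 2 := by
          rw [← pow_mul]
      _ = (a ^ 4) ^ (i.val + e * (j.val * k.val)) := by
          rw [hsq, ← pow_mul, ← pow_mul]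
          congr 1
          ring
      _ = 1 := by rw [h.ha, one_pow]
  rw [orderOf_eq_of_pow_four_eq_one h4, hsq, h.normalForm_eq_one_iff,
    pow_two_mul_eq_one_iff h.ha h.sq_a_ne_one, normalFormOrder]
  congr

theorem card_orderOf_eq (h : IsC4xC2xC2Twisted e a b c) (d : ℕ) :
    Nat.card {x : G // orderOf x = d} = Nat.card {v // normalFormOrder e v = d} :=
  Nat.card_congr (Equiv.subtypeEquiv (Equiv.ofBijective _ h.normalForm_bijective)
    fun v => by rw [Equiv.ofBijective_apply, h.orderOf_normalForm]) |>.symm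

end IsC4xC2xC2Twisted

theorem IsC4xC2xC2.mul_comm {H : Type*} [Group H] {a b c : H} (h : IsC4xC2xC2 a b c)
    (x y : H) : x * y = y * x := by
  have hcomm : ∀ x ∈ ({a, b, c} : Set H), ∀ y ∈ ({a, b, c} : Set H), x * y = y * x := by
    simp only [Set.mem_insert_iff, Set.mem_singleton_iff]
    rintro x (rfl | rfl | rfl) y (rfl | rfl | rfl) <;> grind [h.hab, h.hac, h.hbc]
  have hle := closure_le_centralizer_centralizer {a, b, c}
  rw [h.gen] at hle
  exact Set.centralizer_centralizer_comm_of_comm hcomm x (hle (mem_top x)) y (hle (mem_top y))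

theorem IsC4xC2SemidirectC2.mul_ne_mul {H : Type*} [Group H] {a b c : H}
    (h : IsC4xC2SemidirectC2 a b c) : c * b ≠ b * c := by
  rw [h.isTwisted.hcb, Ne, mul_eq_right, mul_one]
  exact h.isTwisted.sq_a_ne_one

/-- with `N = C₄ × C₂`, the direct product `H = N × C₂` and the semidirect
product `H' = N ⋊ C₂` (where `c` acts by `a ↦ a`, `b ↦ a²b`) are non-isomorphic groups of
order 16 having, for every divisor `d` of 16, the same number of elements of order `d`. -/
theorem todd_groups_not_isomorphic_same_order_counts
    {H H' : Type*} [Group H] [Group H']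
    (a b c : H) (hH : IsC4xC2xC2 a b c)
    (a' b' c' : H') (hH' : IsC4xC2SemidirectC2 a' b' c') :
    (¬ Nonempty (H ≃* H')) ∧
      ∀ d : ℕ, d ∣ 16 →
        Nat.card {x : H // orderOf x = d} = Nat.card {x : H' // orderOf x = d} := by
  refine ⟨fun ⟨φ⟩ => hH'.mul_ne_mul (φ.symm.injective ?_), fun d hd => ?_⟩
  · rw [map_mul, map_mul, hH.mul_comm]
  · rw [hH.isTwisted.card_orderOf_eq, hH'.isTwisted.card_orderOf_eq]
    exact card_normalFormOrder_zero_eq_one hd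
end

section
/- Let k be a finite field, let V be a finite-dimensional k-vector space of dimension at least 1, and let G = V ⋊ GL(V) be the affine group of V (with multiplication (v,g)(v',g') = (v + g v', g g')). Then any two nonzero k-subspaces V₁ and V₂ of V, viewed as subgroups of G via v ↦ (v, 1), are jump equivalent in G. Moreover, if dim V₁ ≠ dim V₂, then V₁ and V₂ are not Gassmann-Sunada equivalent in G; hence (G, V₁, V₂) is a jump triple that is not a Gassmann-Sunada triple. -/
/-!
The linear automorphisms of `V` act transitively on `V \ {0}`, and conjugating the translation by
`v` with `g ∈ GL(V)` gives the translation by `g v`. Hence a conjugation-stable set `S` contains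
either every nonzero translation or none, and for every nonzero subspace `W` the group
`⟨W ∩ S⟩` is `W` or trivial according to this one criterion, independent of `W`: this is jump
equivalence. Taking `S = G`, Gassmann-Sunada equivalence would force `#W₁ = #W₂`, that is
`q ^ dim W₁ = q ^ dim W₂`.
-/

open AffineEquiv

theorem LinearEquiv.exists_apply_eq_of_ne_zero {K V : Type*} [Field K] [AddCommGroup V]
    [Module K V] {v w : V} (hv : v ≠ 0) (hw : w ≠ 0) : ∃ g : V ≃ₗ[K] V, g v = w := by
  let f := (toSpanNonzeroSingleton K V v hv).symm ≪≫ₗ toSpanNonzeroSingleton K V w hw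
  obtain ⟨g, hg⟩ := Submodule.exists_linearEquiv_restrict_eq f
  refine ⟨g, ?_⟩
  have hf : f ⟨v, Submodule.mem_span_singleton_self v⟩ =
      ⟨w, Submodule.mem_span_singleton_self w⟩ := by
    simp only [f, LinearEquiv.trans_apply]
    rw [← toSpanNonzeroSingleton_one K V v hv, LinearEquiv.symm_apply_apply,
      toSpanNonzeroSingleton_one]
  simpa [hf] using (hg ⟨v, Submodule.mem_span_singleton_self v⟩).symm

theorem LinearEquiv.toAffineEquiv_mul_constVAdd_mul_inv {k V : Type*} [Ring k] [AddCommGroup V]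
    [Module k V] (g : V ≃ₗ[k] V) (v : V) :
    g.toAffineEquiv * constVAdd k V v * g.toAffineEquiv⁻¹ = constVAdd k V (g v) := by
  ext x
  change g (v + g.symm x) = g v + x
  rw [map_add, g.apply_symm_apply]

namespace AffineEquiv

variable {k V P : Type*} [Ring k] [AddCommGroup V] [Module k V] [AddTorsor V P]

theorem constVAdd_injective [Nonempty P] :
    Function.Injective (constVAdd k P (V₁ := V)) := by
  intro v w h
  obtain ⟨p⟩ := ‹Nonempty P›
  exact vadd_right_cancel p (congrArg (· p) h)

theorem constVAdd_eq_one_iff [Nonempty P] {v : V} : constVAdd k P v = 1 ↔ v = 0 :=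
  (constVAdd_injective (k := k) (P := P)).eq_iff' (constVAdd_zero k P)

end AffineEquiv

section Equivalences

variable {G : Type*} [Group G]

theorem conjStable_univ : ConjStable (Set.univ : Set G) := fun g =>
  Set.eq_univ_of_forall fun x => ⟨g⁻¹ * x * g, trivial, by group⟩

theorem GassmannEquivalent.natCard_eq {H H' : Subgroup G} (h : GassmannEquivalent H H') :
    Nat.card H = Nat.card H' := by
  simpa only [Set.inter_univ, ← Nat.card_coe_set_eq, SetLike.coe_sort_coe] using
    h Set.univ conjStable_univ

open scoped Classical in
theorem jumpEquivalent_of_closure_inter_eq_ite {H H' : Subgroup G} (hH : H ≠ ⊥) (hH' : H' ≠ ⊥)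
    (p : Set G → Prop)
    (h : ∀ S, ConjStable S → Subgroup.closure ((H : Set G) ∩ S) = if p S then H else ⊥)
    (h' : ∀ S, ConjStable S → Subgroup.closure ((H' : Set G) ∩ S) = if p S then H' else ⊥) :
    JumpEquivalent H H' := by
  intro S T hS hT
  rw [h S hS, h T hT, h' S hS, h' T hT]
  by_cases hpS : p S <;> by_cases hpT : p T <;> simp [hpS, hpT, hH, hH', hH.symm, hH'.symm]

end Equivalences

section Translations

variable {k V : Type*} [Field k] [AddCommGroup V] [Module k V]

theorem ConjStable.constVAdd_mem {S : Set (V ≃ᵃ[k] V)} (hS : ConjStable S) {v₀ v : V}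
    (hv₀ : v₀ ≠ 0) (hv : v ≠ 0) (h : constVAdd k V v₀ ∈ S) : constVAdd k V v ∈ S := by
  obtain ⟨g, rfl⟩ := LinearEquiv.exists_apply_eq_of_ne_zero (K := k) hv₀ hv
  rw [← hS g.toAffineEquiv]
  exact ⟨_, h, g.toAffineEquiv_mul_constVAdd_mul_inv v₀⟩

variable {W : Submodule k V} {A : Subgroup (V ≃ᵃ[k] V)}

open scoped Classical in
theorem closure_translations_inter_eq_ite
    (hA : ∀ f, f ∈ A ↔ ∃ w ∈ W, f = constVAdd k V w) {S : Set (V ≃ᵃ[k] V)} (hS : ConjStable S) :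
    Subgroup.closure ((A : Set (V ≃ᵃ[k] V)) ∩ S) =
      if ∃ v ≠ 0, constVAdd k V v ∈ S then A else ⊥ := by
  split_ifs with hp
  · obtain ⟨v₀, hv₀, hv₀S⟩ := hp
    refine le_antisymm ((Subgroup.closure_le _).2 Set.inter_subset_left) fun f hf => ?_
    obtain ⟨w, -, rfl⟩ := (hA f).1 hf
    rcases eq_or_ne w 0 with rfl | hw
    · rw [constVAdd_zero]
      exact Subgroup.one_mem _
    · exact Subgroup.subset_closure ⟨hf, hS.constVAdd_mem hv₀ hw hv₀S⟩
  · refine Subgroup.closure_eq_bot_iff.2 fun f ⟨hfA, hfS⟩ => ?_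
    obtain ⟨w, -, rfl⟩ := (hA f).1 hfA
    by_contra hw
    exact hp ⟨w, mt constVAdd_eq_one_iff.2 hw, hfS⟩

theorem translations_ne_bot (hA : ∀ f, f ∈ A ↔ ∃ w ∈ W, f = constVAdd k V w) (hW : W ≠ ⊥) :
    A ≠ ⊥ := by
  obtain ⟨w, hw, hw0⟩ := W.exists_mem_ne_zero_of_ne_bot hW
  refine (Subgroup.ne_bot_iff_exists_ne_one).2 ⟨⟨_, (hA _).2 ⟨w, hw, rfl⟩⟩, ?_⟩
  simpa [constVAdd_eq_one_iff] using hw0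

theorem natCard_translations (hA : ∀ f, f ∈ A ↔ ∃ w ∈ W, f = constVAdd k V w) :
    Nat.card A = Nat.card W := by
  have hAW : (A : Set (V ≃ᵃ[k] V)) = constVAdd k V '' W := by
    ext f
    simp [hA, eq_comm]
  change Nat.card (A : Set (V ≃ᵃ[k] V)) = _
  rw [hAW, Nat.card_image_of_injective constVAdd_injective]
  rfl

end Translations

theorem translation_subspaces_jump_not_gassmann_general {k : Type*} [Field k] [Fintype k]
    {V : Type*} [AddCommGroup V] [Module k V] [FiniteDimensional k V]
    (W₁ W₂ : Submodule k V) (hW₁ : W₁ ≠ ⊥) (hW₂ : W₂ ≠ ⊥)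
    (A₁ A₂ : Subgroup (V ≃ᵃ[k] V))
    (hA₁ : ∀ f : V ≃ᵃ[k] V, f ∈ A₁ ↔ ∃ w ∈ W₁, f = AffineEquiv.constVAdd k V w)
    (hA₂ : ∀ f : V ≃ᵃ[k] V, f ∈ A₂ ↔ ∃ w ∈ W₂, f = AffineEquiv.constVAdd k V w) :
    JumpEquivalent A₁ A₂ ∧
      (Module.finrank k W₁ ≠ Module.finrank k W₂ → ¬ GassmannEquivalent A₁ A₂) := by
  refine ⟨jumpEquivalent_of_closure_inter_eq_ite (translations_ne_bot hA₁ hW₁)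
    (translations_ne_bot hA₂ hW₂) _ (fun _ ↦ closure_translations_inter_eq_ite hA₁)
    (fun _ ↦ closure_translations_inter_eq_ite hA₂), fun hne hG ↦ hne ?_⟩
  have hcard : Nat.card W₁ = Nat.card W₂ := by
    rw [← natCard_translations hA₁, ← natCard_translations hA₂, hG.natCard_eq]
  rw [Module.natCard_eq_pow_finrank (K := k) (V := W₁),
    Module.natCard_eq_pow_finrank (K := k) (V := W₂)] at hcard
  exact Nat.pow_right_injective Finite.one_lt_card hcard

/-- let `k` be a finite field and `V` a `k`-vector space of dimension at
least 1, and let `G` be the affine group of `V` (realized as the group of affine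
self-equivalences of `V`).  Any two nonzero subspaces `W₁`, `W₂` of `V`, viewed as subgroups
of translations `{constVAdd w : w ∈ Wᵢ}` of `G`, are jump equivalent in `G`; and if
`dim W₁ ≠ dim W₂` they are not Gassmann-Sunada equivalent, so `(G, W₁, W₂)` is a jump triple
that is not a Gassmann-Sunada triple. -/
theorem translation_subspaces_jump_not_gassmann {k : Type*} [Field k] [Fintype k]
    {V : Type*} [AddCommGroup V] [Module k V] [FiniteDimensional k V]
    (hd : 1 ≤ Module.finrank k V)
    (W₁ W₂ : Submodule k V) (hW₁ : W₁ ≠ ⊥) (hW₂ : W₂ ≠ ⊥)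
    (A₁ A₂ : Subgroup (V ≃ᵃ[k] V))
    (hA₁ : ∀ f : V ≃ᵃ[k] V, f ∈ A₁ ↔ ∃ w ∈ W₁, f = AffineEquiv.constVAdd k V w)
    (hA₂ : ∀ f : V ≃ᵃ[k] V, f ∈ A₂ ↔ ∃ w ∈ W₂, f = AffineEquiv.constVAdd k V w) :
    JumpEquivalent A₁ A₂ ∧
      (Module.finrank k W₁ ≠ Module.finrank k W₂ → ¬ GassmannEquivalent A₁ A₂) :=
  translation_subspaces_jump_not_gassmann_general W₁ W₂ hW₁ hW₂ A₁ A₂ hA₁ hA₂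
end

section
/- Let G be a finitely generated group and let m : G → ℝ≥0 be a length map whose image is a closed and discrete subset of ℝ. Then the jump set Jump(Fil_m^• G) is finite, and every element of the jump set is a value attained by m. -/
section JumpSet

variable {G : Type*} [Group G] (m : G → ℝ)

lemma fil_eq_of_disjoint_range_Ico {δ ε : ℝ} (hδε : δ ≤ ε)
    (h : Disjoint (Set.range m) (Set.Ico δ ε)) : Fil m δ = Fil m ε := by
  unfold Fil
  congr 1
  ext g
  refine ⟨fun hg => lt_of_lt_of_le hg hδε, fun hg => ?_⟩
  show m g < δ
  exact not_le.mp fun hδg => Set.disjoint_left.mp h (Set.mem_range_self g) ⟨hδg, hg⟩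

lemma fil_eq_top_of_closure_eq_top {S : Set G} (hS : Subgroup.closure S = ⊤) {δ : ℝ}
    (h : ∀ s ∈ S, m s < δ) : Fil m δ = ⊤ :=
  top_unique (hS ▸ Subgroup.closure_mono h)

lemma jumpSet_subset_range (hclosed : IsClosed (Set.range m)) : JumpSet m ⊆ Set.range m := by
  intro δ hδ
  by_contra hδm
  obtain ⟨ε, hε, hball⟩ := Metric.isOpen_iff.mp hclosed.isOpen_compl δ hδm
  refine hδ.2 (δ + ε) (by linarith) (fil_eq_of_disjoint_range_Ico m (by linarith) ?_)
  refine Set.disjoint_right.mpr fun x hx => hball ?_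
  rw [Metric.mem_ball, Real.dist_eq, abs_lt]
  constructor <;> linarith [hx.1, hx.2]

lemma jumpSet_bddBelow : BddBelow (JumpSet m) :=
  ⟨0, fun _ hδ => hδ.1.le⟩

lemma jumpSet_bddAbove (hfg : Group.FG G) : BddAbove (JumpSet m) := by
  obtain ⟨S, hS⟩ := hfg.out
  obtain ⟨B, hB⟩ := (S.finite_toSet.image m).bddAbove
  have htop : ∀ δ, B < δ → Fil m δ = ⊤ := fun δ hBδ =>
    fil_eq_top_of_closure_eq_top m hS fun s hs => lt_of_le_of_lt (hB ⟨s, hs, rfl⟩) hBδ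
  refine ⟨B, fun δ hδ => not_lt.mp fun hBδ => ?_⟩
  exact hδ.2 (δ + 1) (by linarith) ((htop δ hBδ).trans (htop (δ + 1) (by linarith)).symm)

end JumpSet

theorem jumpSet_finite_of_fg_of_closed_discrete_general {G : Type*} [Group G]
    (hfg : Group.FG G) (m : G → ℝ)
    (hclosed : IsClosed (Set.range m)) (hdiscrete : DiscreteTopology (Set.range m)) :
    (JumpSet m).Finite ∧ JumpSet m ⊆ Set.range m := by
  have hrange := jumpSet_subset_range m hclosed
  have hbounded : Bornology.IsBounded (JumpSet m) :=
    Metric.isBounded_of_bddAbove_of_bddBelow (jumpSet_bddAbove m hfg) (jumpSet_bddBelow m)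
  have hfinite := Metric.finite_isBounded_inter_isClosed
    (isDiscrete_iff_discreteTopology.mpr hdiscrete) hbounded hclosed
  exact ⟨hfinite.subset fun δ hδ => ⟨hδ, hrange hδ⟩, hrange⟩

/-- if `G` is a finitely generated group and `m` is a length map on `G` whose
image is a closed and discrete subset of `ℝ`, then the jump set of the filtration induced
by `m` is finite and every jump is a value attained by `m`. -/
theorem jumpSet_finite_of_fg_of_closed_discrete {G : Type*} [Group G]
    (hfg : Group.FG G) (m : G → ℝ) (hm : IsLengthMap m)
    (hclosed : IsClosed (Set.range m)) (hdiscrete : DiscreteTopology (Set.range m)) :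
    (JumpSet m).Finite ∧ JumpSet m ⊆ Set.range m :=
  jumpSet_finite_of_fg_of_closed_discrete_general hfg m hclosed hdiscrete
end
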